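/- arXiv:1307.1794 — 8 statements merged into one kernel-verified Lean document; each statement's English description precedes it below -/
import Mathlib

section
/- For any two countable measurable partitions B and C of a probability space with K_w(B) and K_w(C) finite (where K_w(P) = Σ_{P∈P} μ(P)|log μ(P)|^w, w ≥ 1, and all atoms have measure ≤ e^{-w}), the conditional moment satisfies K_w(C|B) ≤ K_w(C), where K_w(C|B) = Σ_{B,C} μ(B∩C) |log(μ(B∩C)/μ(B))|^w. -/
/-! Let `φ = logMoment w`, so `φ(x) = x |log x|^w` and `K_w(P) = Σ_P φ(μ P)`. On `(0, e^{-w}]`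
`φ` is increasing and concave, on `[e^{-w}, 1]` it is decreasing. Fix an atom `C` and put
`a_B = μ B`, `b_B = μ (B ∩ C)`. Then `b_B |log (b_B / a_B)|^w = a_B φ(b_B / a_B) ≤ a_B φ(t_B)` with
`t_B = min (b_B / a_B, e^{-w})`, and Jensen's inequality for the weights `a_B` (whose total mass
`A ≤ 1` only helps, as `A φ(m / A) ≤ φ(m)` for `m ≤ A`) gives
`Σ_B a_B φ(t_B) ≤ φ(Σ_B a_B t_B) ≤ φ(μ C)`, the last step by monotonicity since
`Σ_B a_B t_B ≤ Σ_B b_B ≤ μ C ≤ e^{-w}`. Summing over `C` gives the claim. -/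

open MeasureTheory

/-- `B` is a countable measurable partition of `Ω` (mod `μ`-null sets for the cover). -/
def IsCountablePartition {Ω : Type*} [MeasurableSpace Ω] (μ : Measure Ω)
    (B : ℕ → Set Ω) : Prop :=
  (∀ i, MeasurableSet (B i)) ∧ Pairwise (Function.onFun Disjoint B) ∧ μ (⋃ i, B i) = μ Set.univ

/-- `K_w(B) = Σ_B μ(B) |log μ(B)|^w`. -/
noncomputable def Kw {Ω : Type*} [MeasurableSpace Ω] (μ : Measure Ω) (w : ℝ)
    (B : ℕ → Set Ω) : ℝ :=
  ∑' i, (μ (B i)).toReal * |Real.log (μ (B i)).toReal| ^ w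

/-- `K_w(C|B) = Σ_{B,C} μ(B∩C) |log(μ(B∩C)/μ(B))|^w`. -/
noncomputable def KwCond {Ω : Type*} [MeasurableSpace Ω] (μ : Measure Ω) (w : ℝ)
    (B C : ℕ → Set Ω) : ℝ :=
  ∑' p : ℕ × ℕ, (μ (B p.1 ∩ C p.2)).toReal *
    |Real.log ((μ (B p.1 ∩ C p.2)).toReal / (μ (B p.1)).toReal)| ^ w

open Real Set Finset

noncomputable def logMoment (w x : ℝ) : ℝ := x * |log x| ^ w

section LogMoment

variable {w : ℝ}

lemma logMoment_nonneg {x : ℝ} (hx : 0 ≤ x) : 0 ≤ logMoment w x := by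
  unfold logMoment; positivity

lemma continuousOn_logMoment (hw : 0 ≤ w) : ContinuousOn (logMoment w) {0}ᶜ :=
  continuousOn_id.mul (((Real.continuous_rpow_const hw).comp continuous_abs).comp_continuousOn
    Real.continuousOn_log)

lemma hasDerivAt_logMoment {x : ℝ} (hx0 : 0 < x) (hx1 : x < 1) :
    HasDerivAt (logMoment w) ((-log x) ^ (w - 1) * (-log x - w)) x := by
  have hL : 0 < -log x := neg_pos.2 (log_neg hx0 hx1)
  have hnegLog : HasDerivAt (fun y => -log y) (-x⁻¹) x := (hasDerivAt_log hx0.ne').neg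
  have hpow := (Real.hasDerivAt_rpow_const (p := w) (Or.inl hL.ne')).comp x hnegLog
  have heq : (fun y => y * (-log y) ^ w) =ᶠ[nhds x] logMoment w := by
    filter_upwards [Ioo_mem_nhds hx0 hx1] with y hy
    rw [logMoment, abs_of_nonpos (log_nonpos hy.1.le hy.2.le)]
  refine ((hasDerivAt_id x).mul hpow).congr_of_eventuallyEq heq.symm |>.congr_deriv ?_
  simp only [Function.comp_apply, id]
  have hlog : log x ≠ 0 := (log_neg hx0 hx1).ne
  rw [rpow_sub_one hL.ne']
  field_simp
  ring

lemma exp_neg_le_one (hw : 0 ≤ w) : exp (-w) ≤ 1 := exp_le_one_iff.2 (neg_nonpos.2 hw)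

lemma monotoneOn_logMoment (hw : 0 ≤ w) : MonotoneOn (logMoment w) (Ioc 0 (exp (-w))) := by
  have hderiv : ∀ x ∈ Ioo 0 (exp (-w)),
      HasDerivAt (logMoment w) ((-log x) ^ (w - 1) * (-log x - w)) x :=
    fun x hx => hasDerivAt_logMoment hx.1 (hx.2.trans_le (exp_neg_le_one hw))
  refine monotoneOn_of_deriv_nonneg (convex_Ioc _ _)
    ((continuousOn_logMoment hw).mono fun x hx => hx.1.ne') ?_ ?_ <;> rw [interior_Ioc]
  · exact fun x hx => (hderiv x hx).differentiableAt.differentiableWithinAt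
  · intro x hx
    have hwL : w < -log x := by linarith [(log_lt_iff_lt_exp hx.1).2 hx.2]
    rw [(hderiv x hx).deriv]
    exact mul_nonneg (rpow_nonneg (hw.trans hwL.le) _) (by linarith)

lemma antitoneOn_logMoment (hw : 0 ≤ w) : AntitoneOn (logMoment w) (Icc (exp (-w)) 1) := by
  refine antitoneOn_of_deriv_nonpos (convex_Icc _ _)
    ((continuousOn_logMoment hw).mono fun x hx => ((exp_pos _).trans_le hx.1).ne') ?_ ?_ <;>
    rw [interior_Icc]
  · exact fun x hx =>
      (hasDerivAt_logMoment ((exp_pos _).trans hx.1) hx.2).differentiableAt.differentiableWithinAt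
  · intro x hx
    have hx0 := (exp_pos _).trans hx.1
    have hL : 0 ≤ -log x := neg_nonneg.2 (log_nonpos hx0.le hx.2.le)
    have hLw : -log x < w := by linarith [(lt_log_iff_exp_lt hx0).2 hx.1]
    rw [(hasDerivAt_logMoment hx0 hx.2).deriv]
    exact mul_nonpos_of_nonneg_of_nonpos (rpow_nonneg hL _) (by linarith)

lemma concaveOn_logMoment (hw : 1 ≤ w) : ConcaveOn ℝ (Ioc 0 (exp (-w))) (logMoment w) := by
  have hw0 : (0 : ℝ) ≤ w := zero_le_one.trans hw
  have hderiv : ∀ x ∈ Ioo 0 (exp (-w)),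
      HasDerivAt (logMoment w) ((-log x) ^ (w - 1) * (-log x - w)) x :=
    fun x hx => hasDerivAt_logMoment hx.1 (hx.2.trans_le (exp_neg_le_one hw0))
  refine AntitoneOn.concaveOn_of_deriv (convex_Ioc _ _)
    ((continuousOn_logMoment hw0).mono fun x hx => hx.1.ne') ?_ ?_ <;> rw [interior_Ioc]
  · exact fun x hx => (hderiv x hx).differentiableAt.differentiableWithinAt
  · intro x hx y hy hxy
    have hwLy : w < -log y := by linarith [(log_lt_iff_lt_exp hy.1).2 hy.2]
    have hLyx : -log y ≤ -log x := neg_le_neg (log_le_log hx.1 hxy)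
    rw [(hderiv x hx).deriv, (hderiv y hy).deriv]
    exact mul_le_mul (rpow_le_rpow (by linarith) hLyx (by linarith)) (by linarith)
      (by linarith) (rpow_nonneg (by linarith) _)

lemma logMoment_le_logMoment_min (hw : 0 ≤ w) {t : ℝ} (ht : t ≤ 1) :
    logMoment w t ≤ logMoment w (min t (exp (-w))) := by
  rcases le_total t (exp (-w)) with h | h
  · rw [min_eq_left h]
  · rw [min_eq_right h]
    exact antitoneOn_logMoment hw ⟨le_rfl, exp_neg_le_one hw⟩ ⟨h, ht⟩ h

lemma mul_logMoment_div_le (hw : 0 ≤ w) {m A : ℝ} (hm : 0 < m) (hmA : m ≤ A) (hA : A ≤ 1) :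
    A * logMoment w (m / A) ≤ logMoment w m := by
  have hA0 : 0 < A := hm.trans_le hmA
  have hlog : |log (m / A)| ≤ |log m| := by
    rw [abs_of_nonpos (log_nonpos (div_pos hm hA0).le ((div_le_one hA0).2 hmA)),
      abs_of_nonpos (log_nonpos hm.le (hmA.trans hA)), log_div hm.ne' hA0.ne']
    linarith [log_nonpos hA0.le hA]
  unfold logMoment
  rw [← mul_assoc, mul_div_cancel₀ _ hA0.ne']
  gcongr

lemma sum_mul_logMoment_le (hw : 1 ≤ w) {ι : Type*} {s : Finset ι} (hs : s.Nonempty)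
    {a t : ι → ℝ} (ha : ∀ i ∈ s, 0 < a i) (hsa : ∑ i ∈ s, a i ≤ 1)
    (ht : ∀ i ∈ s, t i ∈ Ioc 0 (exp (-w))) :
    ∑ i ∈ s, a i * logMoment w (t i) ≤ logMoment w (∑ i ∈ s, a i * t i) := by
  have hw0 : (0 : ℝ) ≤ w := zero_le_one.trans hw
  set A := ∑ i ∈ s, a i
  have hA : 0 < A := sum_pos ha hs
  have hjensen := (concaveOn_logMoment hw).le_map_centerMass (fun i hi => (ha i hi).le) hA ht
  simp only [centerMass, Function.comp_apply, smul_eq_mul] at hjensen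
  have hm : 0 < ∑ i ∈ s, a i * t i := sum_pos (fun i hi => mul_pos (ha i hi) (ht i hi).1) hs
  calc ∑ i ∈ s, a i * logMoment w (t i)
      = A * (A⁻¹ * ∑ i ∈ s, a i * logMoment w (t i)) := by field_simp
    _ ≤ A * logMoment w (A⁻¹ * ∑ i ∈ s, a i * t i) := by gcongr
    _ = A * logMoment w ((∑ i ∈ s, a i * t i) / A) := by rw [inv_mul_eq_div]
    _ ≤ logMoment w (∑ i ∈ s, a i * t i) := by
      refine mul_logMoment_div_le hw0 hm (sum_le_sum fun i hi => ?_) hsa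
      exact mul_le_of_le_one_right (ha i hi).le ((ht i hi).2.trans (exp_neg_le_one hw0))

lemma mul_abs_log_div_rpow_le (hw : 0 ≤ w) {a b : ℝ} (hb : 0 < b) (hba : b ≤ a) :
    b * |log (b / a)| ^ w ≤ a * logMoment w (min (b / a) (exp (-w))) := by
  have ha : 0 < a := hb.trans_le hba
  calc b * |log (b / a)| ^ w = a * logMoment w (b / a) := by
        rw [logMoment, ← mul_assoc, mul_div_cancel₀ _ ha.ne']
    _ ≤ _ := by gcongr; exact logMoment_le_logMoment_min hw ((div_le_one ha).2 hba)

theorem sum_mul_abs_log_div_rpow_le (hw : 1 ≤ w) {ι : Type*} {s : Finset ι} {a b : ι → ℝ}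
    {c : ℝ} (hb : ∀ i ∈ s, 0 ≤ b i) (hba : ∀ i ∈ s, b i ≤ a i) (ha : ∑ i ∈ s, a i ≤ 1)
    (hbc : ∑ i ∈ s, b i ≤ c) (hc : c ≤ exp (-w)) :
    ∑ i ∈ s, b i * |log (b i / a i)| ^ w ≤ logMoment w c := by
  classical
  have hw0 : (0 : ℝ) ≤ w := zero_le_one.trans hw
  rw [← sum_filter_of_ne (p := fun i => 0 < b i)
    fun i hi hne => (hb i hi).lt_of_ne fun h => hne (by simp [← h])]
  set s' := s.filter (fun i => 0 < b i)
  have hs' : ∀ i ∈ s', i ∈ s ∧ 0 < b i := fun i hi => mem_filter.1 hi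
  rcases s'.eq_empty_or_nonempty with h | hne
  · rw [h, sum_empty]
    exact logMoment_nonneg ((sum_nonneg hb).trans hbc)
  set t := fun i => min (b i / a i) (exp (-w))
  have hapos : ∀ i ∈ s', 0 < a i := fun i hi => (hs' i hi).2.trans_le (hba i (hs' i hi).1)
  have hat : ∀ i ∈ s', a i * t i ≤ b i := fun i hi =>
    (mul_le_mul_of_nonneg_left (min_le_left _ _) (hapos i hi).le).trans_eq
      (mul_div_cancel₀ _ (hapos i hi).ne')
  have ht : ∀ i ∈ s', t i ∈ Ioc 0 (exp (-w)) := fun i hi =>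
    ⟨lt_min (div_pos (hs' i hi).2 (hapos i hi)) (exp_pos _), min_le_right _ _⟩
  have hsa : ∑ i ∈ s', a i ≤ 1 := (sum_le_sum_of_subset_of_nonneg (filter_subset _ _)
    fun i hi _ => (hb i hi).trans (hba i hi)).trans ha
  have hm0 : 0 < ∑ i ∈ s', a i * t i :=
    sum_pos (fun i hi => mul_pos (hapos i hi) (ht i hi).1) hne
  have hmc : ∑ i ∈ s', a i * t i ≤ c := (sum_le_sum hat).trans <|
    (sum_le_sum_of_subset_of_nonneg (filter_subset _ _) fun i hi _ => hb i hi).trans hbc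
  calc ∑ i ∈ s', b i * |log (b i / a i)| ^ w ≤ ∑ i ∈ s', a i * logMoment w (t i) :=
        sum_le_sum fun i hi => mul_abs_log_div_rpow_le hw0 (hs' i hi).2 (hba i (hs' i hi).1)
    _ ≤ logMoment w (∑ i ∈ s', a i * t i) := sum_mul_logMoment_le hw hne hapos hsa ht
    _ ≤ logMoment w c :=
        monotoneOn_logMoment hw0 ⟨hm0, hmc.trans hc⟩ ⟨hm0.trans_le hmc, hc⟩ hmc

end LogMoment

lemma tsum_le_tsum_of_sum_fiber_le {β γ : Type*} {f : β × γ → ℝ} {g : γ → ℝ}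
    (hf : ∀ p, 0 ≤ f p) (hg : Summable g) (h : ∀ j (s : Finset β), ∑ i ∈ s, f (i, j) ≤ g j) :
    ∑' p, f p ≤ ∑' j, g j := by
  classical
  have hg0 : ∀ j, 0 ≤ g j := fun j => by simpa using h j ∅
  refine Real.tsum_le_of_sum_le hf fun S => ?_
  calc ∑ p ∈ S, f p ≤ ∑ p ∈ S.image Prod.fst ×ˢ S.image Prod.snd, f p :=
        sum_le_sum_of_subset_of_nonneg subset_product fun p _ _ => hf p
    _ = ∑ j ∈ S.image Prod.snd, ∑ i ∈ S.image Prod.fst, f (i, j) := sum_product_right _ _ _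
    _ ≤ ∑ j ∈ S.image Prod.snd, g j := sum_le_sum fun j _ => h j _
    _ ≤ ∑' j, g j := hg.sum_le_tsum _ fun j _ => hg0 j

lemma sum_measureReal_inter_le {Ω ι : Type*} [MeasurableSpace Ω] {μ : Measure Ω}
    [IsFiniteMeasure μ] {B : ι → Set Ω} (hB : ∀ i, MeasurableSet (B i))
    (hd : Pairwise (Function.onFun Disjoint B)) (C : Set Ω) (s : Finset ι) :
    ∑ i ∈ s, μ.real (B i ∩ C) ≤ μ.real C := by
  simp_rw [← measureReal_restrict_apply (hB _)]
  rw [← measureReal_biUnion_finset (fun i _ j _ hij => hd hij) fun i _ => hB i]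
  calc (μ.restrict C).real (⋃ i ∈ s, B i) ≤ (μ.restrict C).real univ :=
        measureReal_mono (subset_univ _)
    _ = μ.real C := by simp

theorem conditional_moment_le_general {Ω : Type*} [MeasurableSpace Ω]
    (μ : Measure Ω) [IsProbabilityMeasure μ] (w : ℝ) (hw : 1 ≤ w)
    (B C : ℕ → Set Ω)
    (hB : IsCountablePartition μ B)
    (hCsmall : ∀ i, μ (C i) ≤ ENNReal.ofReal (Real.exp (-w)))
    (hKC : Summable fun i => (μ (C i)).toReal * |Real.log (μ (C i)).toReal| ^ w) :
    KwCond μ w B C ≤ Kw μ w C := by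
  refine tsum_le_tsum_of_sum_fiber_le (fun p => by positivity) hKC fun j s => ?_
  have ha : ∑ i ∈ s, μ.real (B i) ≤ 1 := by
    simpa using sum_measureReal_inter_le (μ := μ) hB.1 hB.2.1 univ s
  exact sum_mul_abs_log_div_rpow_le hw (fun i _ => measureReal_nonneg)
    (fun i _ => measureReal_mono inter_subset_left) ha
    (sum_measureReal_inter_le hB.1 hB.2.1 (C j) s)
    (ENNReal.toReal_le_of_le_ofReal (exp_pos _).le (hCsmall j))

theorem conditional_moment_le {Ω : Type*} [MeasurableSpace Ω]
    (μ : Measure Ω) [IsProbabilityMeasure μ] (w : ℝ) (hw : 1 ≤ w)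
    (B C : ℕ → Set Ω)
    (hB : IsCountablePartition μ B) (hC : IsCountablePartition μ C)
    (hBsmall : ∀ i, μ (B i) ≤ ENNReal.ofReal (Real.exp (-w)))
    (hCsmall : ∀ i, μ (C i) ≤ ENNReal.ofReal (Real.exp (-w)))
    (hKB : Summable fun i => (μ (B i)).toReal * |Real.log (μ (B i)).toReal| ^ w)
    (hKC : Summable fun i => (μ (C i)).toReal * |Real.log (μ (C i)).toReal| ^ w) :
    KwCond μ w B C ≤ Kw μ w C :=
  conditional_moment_le_general μ w hw B C hB hCsmall hKC
end

section
/- For any two countable measurable partitions B and C of a probability space with finite w-th information moments, K_w(B ∨ C)^{1/w} ≤ K_w(C|B)^{1/w} + K_w(B)^{1/w}, where B ∨ C is the common refinement. -/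
open MeasureTheory

/-- `K_w(B ∨ C)` for the common refinement `B ∨ C = {B ∩ C}`. -/
noncomputable def KwJoin {Ω : Type*} [MeasurableSpace Ω] (μ : Measure Ω) (w : ℝ)
    (B C : ℕ → Set Ω) : ℝ :=
  ∑' p : ℕ × ℕ, (μ (B p.1 ∩ C p.2)).toReal *
    |Real.log ((μ (B p.1 ∩ C p.2)).toReal)| ^ w

/-!
Since `μ (B ∩ C) ≤ μ B ≤ 1`, the triangle inequality for logarithms gives
`|log μ(B ∩ C)| ≤ |log (μ(B ∩ C) / μ B)| + |log μ B|`. Minkowski's inequality in `ℓ^w` with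
weights `μ(B ∩ C)` then bounds `K_w(B ∨ C)^{1/w}` by `K_w(C|B)^{1/w}` plus the `w`-th root of
`Σ_{B,C} μ(B ∩ C) |log μ B|^w`, which is `K_w(B)` because `C` partitions every `B` up to a null set.
The sums are taken in `ℝ≥0∞`, where they always converge; back in `ℝ` a divergent sum has the junk
value `0`, which is harmless because `K_w(C|B) ≤ K_w(B ∨ C)` termwise.
-/

open ENNReal Real

theorem ENNReal.Lp_add_le_tsum_weighted {ι : Type*} {p : ℝ} (hp : 1 ≤ p) (a f g : ι → ℝ≥0∞) :
    (∑' i, a i * (f i + g i) ^ p) ^ (1 / p) ≤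
      (∑' i, a i * f i ^ p) ^ (1 / p) + (∑' i, a i * g i ^ p) ^ (1 / p) := by
  let : MeasurableSpace ι := ⊤
  have hν (h : ι → ℝ≥0∞) :
      ∫⁻ i, h i ∂Measure.sum (fun i => a i • Measure.dirac i) = ∑' i, a i * h i := by
    simp only [lintegral_sum_measure, lintegral_smul_measure,
      lintegral_dirac' _ measurable_from_top, smul_eq_mul]
  simpa only [hν, Pi.add_apply] using
    ENNReal.lintegral_Lp_add_le (μ := Measure.sum fun i => a i • Measure.dirac i)
      (measurable_from_top (f := f)).aemeasurable (measurable_from_top (f := g)).aemeasurable hp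

theorem Real.abs_log_le_abs_log_div_add_abs_log {x y : ℝ} (hx : 0 ≤ x) (hxy : x ≤ y) :
    |log x| ≤ |log (x / y)| + |log y| := by
  rcases hx.eq_or_lt with rfl | hx
  · simp
  rw [log_div hx.ne' (hx.trans_le hxy).ne']
  simpa using abs_sub_le (log x) (log y) 0

theorem Real.abs_log_div_le_abs_log {x y : ℝ} (hx : 0 ≤ x) (hxy : x ≤ y) (hy : y ≤ 1) :
    |log (x / y)| ≤ |log x| := by
  rcases hx.eq_or_lt with rfl | hx
  · simp
  have hlogxy : log x ≤ log y := log_le_log hx hxy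
  have hlogy : log y ≤ 0 := log_nonpos (hx.le.trans hxy) hy
  rw [log_div hx.ne' (hx.trans_le hxy).ne', abs_of_nonpos (by linarith),
    abs_of_nonpos (by linarith)]
  linarith

theorem ENNReal.toReal_rpow_le_add_of_rpow_le_add {a b c : ℝ≥0∞} {r : ℝ} (hr : 0 < r)
    (hba : b ≤ a) (hc : c ≠ ∞) (h : a ^ r ≤ b ^ r + c ^ r) :
    a.toReal ^ r ≤ b.toReal ^ r + c.toReal ^ r := by
  rcases eq_or_ne a ∞ with rfl | ha
  · rw [toReal_top, zero_rpow hr.ne']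
    positivity
  have hb : b ≠ ∞ := ne_top_of_le_ne_top ha hba
  have hfin (x : ℝ≥0∞) (hx : x ≠ ∞) : x ^ r ≠ ∞ := rpow_ne_top_of_nonneg hr.le hx
  simpa only [← toReal_rpow, toReal_add (hfin b hb) (hfin c hc)] using
    toReal_mono (add_ne_top.2 ⟨hfin b hb, hfin c hc⟩) h

theorem ENNReal.ofReal_toReal_mul_abs_rpow {a : ℝ≥0∞} (ha : a ≠ ∞) (x : ℝ) {w : ℝ}
    (hw : 0 ≤ w) : ENNReal.ofReal (a.toReal * |x| ^ w) = a * ENNReal.ofReal |x| ^ w := by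
  rw [ofReal_mul toReal_nonneg, ofReal_toReal ha, ofReal_rpow_of_nonneg (abs_nonneg x) hw]

theorem ENNReal.tsum_toReal_mul_abs_rpow {ι : Type*} {a : ι → ℝ≥0∞} (ha : ∀ i, a i ≠ ∞)
    (x : ι → ℝ) {w : ℝ} (hw : 0 ≤ w) :
    ∑' i, (a i).toReal * |x i| ^ w = (∑' i, a i * ENNReal.ofReal |x i| ^ w).toReal := by
  simp only [← ofReal_toReal_mul_abs_rpow (ha _) _ hw,
    ENNReal.tsum_toReal_eq fun _ => ofReal_ne_top]
  exact tsum_congr fun i => (toReal_ofReal (by positivity)).symm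

namespace IsCountablePartition

variable {Ω : Type*} [MeasurableSpace Ω] {μ : Measure Ω} [IsFiniteMeasure μ] {C : ℕ → Set Ω}

theorem tsum_measure_inter (hC : IsCountablePartition μ C) (s : Set Ω) :
    ∑' j, μ (s ∩ C j) = μ s := by
  have hU : MeasurableSet (⋃ j, C j) := .iUnion hC.1
  have hnull : μ (⋃ j, C j)ᶜ = 0 := by
    rw [measure_compl hU (measure_ne_top μ _), hC.2.2, tsub_self]
  calc ∑' j, μ (s ∩ C j) = ∑' j, μ.restrict (C j) s :=
        tsum_congr fun j => (Measure.restrict_apply' (hC.1 j)).symm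
    _ = μ.restrict (⋃ j, C j) s := by
        rw [Measure.restrict_iUnion hC.2.1 hC.1, Measure.sum_apply_of_countable]
    _ = μ s := by rw [Measure.restrict_apply' hU, measure_inter_conull hnull]

theorem tsum_prod_measure_inter_mul (hC : IsCountablePartition μ C) {ι : Type*}
    (B : ι → Set Ω) (f : ι → ℝ≥0∞) :
    ∑' p : ι × ℕ, μ (B p.1 ∩ C p.2) * f p.1 = ∑' i, μ (B i) * f i := by
  rw [ENNReal.tsum_prod']
  exact tsum_congr fun i => by rw [← hC.tsum_measure_inter (B i), ← ENNReal.tsum_mul_right]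

end IsCountablePartition

theorem join_moment_le_cond_general {Ω : Type*} [MeasurableSpace Ω]
    (μ : Measure Ω) [IsProbabilityMeasure μ] (w : ℝ) (hw : 1 ≤ w)
    (B C : ℕ → Set Ω)
    (hC : IsCountablePartition μ C)
    (hKB : Summable fun i => (μ (B i)).toReal * |Real.log (μ (B i)).toReal| ^ w) :
    KwJoin μ w B C ^ (1 / w) ≤ KwCond μ w B C ^ (1 / w) + Kw μ w B ^ (1 / w) := by
  have hw0 : 0 ≤ w := zero_le_one.trans hw
  set e : ℕ × ℕ → ℝ≥0∞ := fun p => μ (B p.1 ∩ C p.2)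
  set L : ℕ × ℕ → ℝ≥0∞ := fun p => .ofReal |log (e p).toReal|
  set F : ℕ × ℕ → ℝ≥0∞ := fun p => .ofReal |log ((e p).toReal / (μ (B p.1)).toReal)|
  set G : ℕ → ℝ≥0∞ := fun i => .ofReal |log (μ (B i)).toReal|
  have hJ : KwJoin μ w B C = (∑' p, e p * L p ^ w).toReal :=
    tsum_toReal_mul_abs_rpow (fun _ => measure_ne_top μ _) _ hw0
  have hCd : KwCond μ w B C = (∑' p, e p * F p ^ w).toReal :=
    tsum_toReal_mul_abs_rpow (fun _ => measure_ne_top μ _) _ hw0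
  have hK : Kw μ w B = (∑' i, μ (B i) * G i ^ w).toReal :=
    tsum_toReal_mul_abs_rpow (fun _ => measure_ne_top μ _) _ hw0
  have hKfin : ∑' i, μ (B i) * G i ^ w ≠ ∞ := by
    simpa only [ofReal_toReal_mul_abs_rpow (measure_ne_top μ _) _ hw0] using
      hKB.tsum_ofReal_ne_top
  have hPQ (p : ℕ × ℕ) : (e p).toReal ≤ (μ (B p.1)).toReal :=
    toReal_mono (measure_ne_top μ _) (measure_mono Set.inter_subset_left)
  rw [hJ, hCd, hK]
  refine toReal_rpow_le_add_of_rpow_le_add (by positivity) (ENNReal.tsum_le_tsum fun p => ?_)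
    hKfin ?_
  · gcongr
    exact ofReal_le_ofReal (abs_log_div_le_abs_log toReal_nonneg (hPQ p) measureReal_le_one)
  calc (∑' p, e p * L p ^ w) ^ (1 / w) ≤ (∑' p, e p * (F p + G p.1) ^ w) ^ (1 / w) := by
        gcongr with p
        rw [← ofReal_add (abs_nonneg _) (abs_nonneg _)]
        exact ofReal_le_ofReal (abs_log_le_abs_log_div_add_abs_log toReal_nonneg (hPQ p))
    _ ≤ (∑' p, e p * F p ^ w) ^ (1 / w) + (∑' p, e p * G p.1 ^ w) ^ (1 / w) :=
        Lp_add_le_tsum_weighted hw e F (fun p => G p.1)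
    _ = _ := by rw [hC.tsum_prod_measure_inter_mul B (fun i => G i ^ w)]

theorem join_moment_le_cond {Ω : Type*} [MeasurableSpace Ω]
    (μ : Measure Ω) [IsProbabilityMeasure μ] (w : ℝ) (hw : 1 ≤ w)
    (B C : ℕ → Set Ω)
    (hB : IsCountablePartition μ B) (hC : IsCountablePartition μ C)
    (hBsmall : ∀ i, μ (B i) ≤ ENNReal.ofReal (Real.exp (-w)))
    (hCsmall : ∀ i, μ (C i) ≤ ENNReal.ofReal (Real.exp (-w)))
    (hKB : Summable fun i => (μ (B i)).toReal * |Real.log (μ (B i)).toReal| ^ w)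
    (hKC : Summable fun i => (μ (C i)).toReal * |Real.log (μ (C i)).toReal| ^ w) :
    KwJoin μ w B C ^ (1 / w) ≤ KwCond μ w B C ^ (1 / w) + Kw μ w B ^ (1 / w) :=
  join_moment_le_cond_general μ w hw B C hC hKB
end

section
/- For any two countable measurable partitions B and C with finite w-th information moments, K_w(B ∨ C)^{1/w} ≤ K_w(B)^{1/w} + K_w(C)^{1/w}. -/
open MeasureTheory

open Real
open scoped ENNReal

/-! Since every atom has measure at most one,
`|log μ(B ∩ C)| = |log μ(B)| + |log (μ(B ∩ C) / μ(B))|`, so Minkowski's inequality in `ℓ^w`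
with weights `μ(B ∩ C)` gives `K_w(B ∨ C)^{1/w} ≤ K_w(B)^{1/w} + K_w(C|B)^{1/w}`.
It remains to see `K_w(C|B) ≤ K_w(C)`: for a fixed atom `C`, the ratios
`r_B = μ(B ∩ C) / μ(B)` have mean `c = μ(C)` under the weights `μ(B)`, and `φ r = r |log r|^w`
lies below its tangent line at `c` on `[0, 1]` as soon as `c ≤ e^{-w}`,
whence `∑_B μ(B) φ(r_B) ≤ φ(c)`. -/

/-- The derivative of `r ↦ r |log r| ^ w` at `r = exp (-x)`. -/
noncomputable def tangentSlope (w x : ℝ) : ℝ := x ^ w - w * x ^ (w - 1)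

theorem tangentSlope_eq {w x : ℝ} (hw : w ≠ 0) (hx : 0 ≤ x) :
    tangentSlope w x = x ^ (w - 1) * (x - w) := by
  rw [tangentSlope, mul_sub, ← Real.rpow_add_one' hx (by simpa using hw)]
  ring_nf

theorem tangentSlope_le_tangentSlope {w x y : ℝ} (hw : 1 ≤ w) (hx : 0 ≤ x) (hxy : x ≤ y)
    (hwy : w ≤ y) : tangentSlope w x ≤ tangentSlope w y := by
  have hw0 : w ≠ 0 := by linarith
  rw [tangentSlope_eq hw0 hx, tangentSlope_eq hw0 (hx.trans hxy)]
  rcases le_total x w with hxw | hwx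
  · exact (mul_nonpos_of_nonneg_of_nonpos (rpow_nonneg hx _) (by linarith)).trans
      (mul_nonneg (rpow_nonneg (hx.trans hxy) _) (by linarith))
  · exact mul_le_mul (rpow_le_rpow hx hxy (by linarith)) (by linarith) (by linarith)
        (rpow_nonneg (hx.trans hxy) _)

theorem exp_neg_mul_rpow_le_tangent {w a b : ℝ} (hw : 1 ≤ w) (ha : w ≤ a) (hb : 0 ≤ b) :
    exp (-b) * b ^ w ≤ exp (-a) * a ^ w + tangentSlope w a * (exp (-b) - exp (-a)) := by
  set gap : ℝ → ℝ := fun x => exp (-a) * a ^ w + tangentSlope w a * (exp (-x) - exp (-a))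
    - exp (-x) * x ^ w with hgap
  have hderiv : ∀ x, HasDerivAt gap (exp (-x) * (tangentSlope w x - tangentSlope w a)) x := by
    intro x
    have hexp : HasDerivAt (fun x => exp (-x)) (-exp (-x)) x := by
      simpa using (hasDerivAt_neg x).exp
    refine ((((hexp.sub_const (exp (-a))).const_mul (tangentSlope w a)).const_add
      (exp (-a) * a ^ w)).sub (hexp.mul (hasDerivAt_rpow_const (Or.inr hw)))).congr_deriv ?_
    rw [tangentSlope, tangentSlope]
    ring
  have hcont : Continuous gap := continuous_iff_continuousAt.2 fun x => (hderiv x).continuousAt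
  have hdiff : ∀ x, DifferentiableAt ℝ gap x := fun x => (hderiv x).differentiableAt
  have hgap_a : gap a = 0 := by simp [hgap]
  suffices 0 ≤ gap b by simp only [hgap] at this; linarith
  rcases le_total b a with hba | hab
  · have hanti : AntitoneOn gap (Set.Icc 0 a) := by
      refine antitoneOn_of_deriv_nonpos (convex_Icc 0 a) hcont.continuousOn
        (fun x _ => (hdiff x).differentiableWithinAt) fun x hx => ?_
      rw [interior_Icc] at hx
      rw [(hderiv x).deriv]
      exact mul_nonpos_of_nonneg_of_nonpos (exp_pos _).le (sub_nonpos.2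
        (tangentSlope_le_tangentSlope hw hx.1.le hx.2.le ha))
    simpa [hgap_a] using hanti ⟨hb, hba⟩ ⟨hb.trans hba, le_rfl⟩ hba
  · have hmono : MonotoneOn gap (Set.Ici a) := by
      refine monotoneOn_of_deriv_nonneg (convex_Ici a) hcont.continuousOn
        (fun x _ => (hdiff x).differentiableWithinAt) fun x hx => ?_
      rw [interior_Ici] at hx
      rw [(hderiv x).deriv]
      exact mul_nonneg (exp_pos _).le (sub_nonneg.2
        (tangentSlope_le_tangentSlope hw (by linarith) hx.out.le (by linarith [hx.out])))
    simpa [hgap_a] using hmono Set.self_mem_Ici hab hab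

theorem le_abs_log_of_le_exp_neg {w c : ℝ} (hw : 0 ≤ w) (hc : 0 < c) (hcw : c ≤ exp (-w)) :
    w ≤ |log c| := by
  have : log c ≤ -w := by simpa using log_le_log hc hcw
  rw [abs_of_nonpos (by linarith)]
  linarith

theorem mul_abs_log_rpow_le_tangent {w c r : ℝ} (hw : 1 ≤ w) (hc : 0 < c) (hcw : c ≤ exp (-w))
    (hr0 : 0 ≤ r) (hr1 : r ≤ 1) :
    r * |log r| ^ w ≤ c * |log c| ^ w + tangentSlope w |log c| * (r - c) := by
  have hwa := le_abs_log_of_le_exp_neg (by linarith) hc hcw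
  have hc_eq : exp (-|log c|) = c := by
    rw [abs_of_nonpos (log_nonpos hc.le (hcw.trans (exp_le_one_iff.2 (by linarith)))), neg_neg,
      exp_log hc]
  rcases hr0.eq_or_lt with rfl | hr
  · have : 0 ≤ c * (w * |log c| ^ (w - 1)) := by positivity
    simp only [tangentSlope, zero_mul]
    linarith
  · have hr_eq : exp (-|log r|) = r := by
      rw [abs_of_nonpos (log_nonpos hr0 hr1), neg_neg, exp_log hr]
    simpa only [hr_eq, hc_eq] using
      exp_neg_mul_rpow_le_tangent hw hwa (abs_nonneg (log r))

theorem mul_abs_log_div_rpow_add_le {w c m p : ℝ} (hw : 1 ≤ w) (hc : 0 < c) (hcw : c ≤ exp (-w))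
    (hm : 0 ≤ m) (hmp : m ≤ p) :
    m * |log (m / p)| ^ w + p * (tangentSlope w |log c| * c) ≤
      p * (c * |log c| ^ w) + tangentSlope w |log c| * m := by
  have hp : 0 ≤ p := hm.trans hmp
  have hpm : p * (m / p) = m := by
    rcases hp.eq_or_lt with rfl | hp
    · simp [le_antisymm hmp hm]
    · exact mul_div_cancel₀ m hp.ne'
  have := mul_le_mul_of_nonneg_left (mul_abs_log_rpow_le_tangent hw hc hcw
    (div_nonneg hm hp) (div_le_one_of_le₀ hmp hp)) hp
  rw [← mul_assoc, hpm, mul_add] at this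
  linear_combination this + tangentSlope w |log c| * hpm

theorem ENNReal.mul_ofReal_rpow {a : ℝ≥0∞} {x w : ℝ} (ha : a ≠ ∞) (hx : 0 ≤ x) (hw : 0 ≤ w) :
    a * ENNReal.ofReal x ^ w = ENNReal.ofReal (a.toReal * x ^ w) := by
  rw [ENNReal.ofReal_rpow_of_nonneg hx hw, ENNReal.ofReal_mul ENNReal.toReal_nonneg,
    ENNReal.ofReal_toReal ha]

/-- Jensen's inequality through a supporting line: the hypothesis is
`F i ≤ p i * (y + d * (m i / p i - ∑' j, m j))`, rearranged so that no subtraction occurs. -/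
theorem ENNReal.tsum_le_of_le_affine {ι : Type*} {F p m : ι → ℝ≥0∞} {y d : ℝ≥0∞}
    (hp : ∑' i, p i = 1) (hd : d * ∑' i, m i ≠ ∞)
    (h : ∀ i, F i + p i * (d * ∑' i, m i) ≤ p i * y + d * m i) : ∑' i, F i ≤ y := by
  have := ENNReal.tsum_le_tsum h
  rw [ENNReal.tsum_add, ENNReal.tsum_add, ENNReal.tsum_mul_right, ENNReal.tsum_mul_right,
    ENNReal.tsum_mul_left, hp, one_mul, one_mul] at this
  exact (ENNReal.add_le_add_iff_right hd).1 this

theorem ENNReal.tsum_mul_add_rpow_le {ι : Type*} [Countable ι] {w : ℝ} (hw : 1 ≤ w)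
    (m f g : ι → ℝ≥0∞) :
    (∑' i, m i * (f i + g i) ^ w) ^ (1 / w) ≤
      (∑' i, m i * f i ^ w) ^ (1 / w) + (∑' i, m i * g i ^ w) ^ (1 / w) := by
  let _ : MeasurableSpace ι := ⊤
  have hw0 : 0 < w := by linarith
  have hweight : ∀ h : ι → ℝ≥0∞,
      ∑' i, m i * h i ^ w = ∫⁻ i, (m i ^ (1 / w) * h i) ^ w ∂Measure.count := by
    intro h
    rw [lintegral_count' Measurable.of_discrete]
    congr 1 with i
    rw [ENNReal.mul_rpow_of_nonneg _ _ hw0.le, ← ENNReal.rpow_mul, one_div_mul_cancel hw0.ne',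
      ENNReal.rpow_one]
  simpa only [hweight, mul_add, Pi.add_apply] using
    ENNReal.lintegral_Lp_add_le (μ := Measure.count) (f := fun i => m i ^ (1 / w) * f i)
      (g := fun i => m i ^ (1 / w) * g i) Measurable.of_discrete.aemeasurable
      Measurable.of_discrete.aemeasurable hw

theorem tsum_mul_ofReal_abs_log_div_rpow_le {ι : Type*} {w : ℝ} (hw : 1 ≤ w)
    {p m : ι → ℝ≥0∞} (hp : ∑' i, p i = 1) (hmp : ∀ i, m i ≤ p i)
    (hsmall : ∑' i, m i ≤ ENNReal.ofReal (exp (-w))) :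
    ∑' i, m i * ENNReal.ofReal |log ((m i).toReal / (p i).toReal)| ^ w ≤
      (∑' i, m i) * ENNReal.ofReal |log (∑' i, m i).toReal| ^ w := by
  have hw0 : 0 ≤ w := by linarith
  set S := ∑' i, m i
  have hS_top : S ≠ ∞ := ne_top_of_le_ne_top ENNReal.ofReal_ne_top hsmall
  rcases eq_or_ne S 0 with hS0 | hS0
  · simp [ENNReal.tsum_eq_zero.1 hS0]
  have hc : 0 < S.toReal := ENNReal.toReal_pos hS0 hS_top
  have hcw : S.toReal ≤ exp (-w) := ENNReal.toReal_le_of_le_ofReal (exp_pos _).le hsmall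
  have hwc := le_abs_log_of_le_exp_neg hw0 hc hcw
  have hd : 0 ≤ tangentSlope w |log S.toReal| := by
    rw [tangentSlope_eq (by linarith) (abs_nonneg _)]
    exact mul_nonneg (rpow_nonneg (abs_nonneg _) _) (by linarith)
  refine ENNReal.tsum_le_of_le_affine (m := m)
    (d := ENNReal.ofReal (tangentSlope w |log S.toReal|)) hp
    (ENNReal.mul_ne_top ENNReal.ofReal_ne_top hS_top) fun i => ?_
  have hp_top : p i ≠ ∞ := ne_top_of_le_ne_top ENNReal.one_ne_top (hp ▸ ENNReal.le_tsum i)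
  have hm_top : m i ≠ ∞ := ne_top_of_le_ne_top hp_top (hmp i)
  have key := ENNReal.ofReal_le_ofReal <| mul_abs_log_div_rpow_add_le hw hc hcw
    ENNReal.toReal_nonneg (ENNReal.toReal_mono hp_top (hmp i))
  rw [ENNReal.ofReal_add (by positivity) (by positivity),
    ENNReal.ofReal_add (by positivity) (mul_nonneg hd ENNReal.toReal_nonneg)] at key
  convert key using 2
  · exact ENNReal.mul_ofReal_rpow hm_top (abs_nonneg _) hw0
  · rw [ENNReal.ofReal_mul ENNReal.toReal_nonneg, ENNReal.ofReal_toReal hp_top,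
      ENNReal.ofReal_mul hd, ENNReal.ofReal_toReal hS_top]
  · rw [ENNReal.ofReal_mul ENNReal.toReal_nonneg, ENNReal.ofReal_toReal hp_top,
      ENNReal.mul_ofReal_rpow hS_top (abs_nonneg _) hw0]
  · rw [ENNReal.ofReal_mul hd, ENNReal.ofReal_toReal hm_top]

theorem abs_log_eq_abs_log_add_abs_log_div {m p : ℝ} (hm : 0 < m) (hmp : m ≤ p) (hp : p ≤ 1) :
    |log m| = |log p| + |log (m / p)| := by
  have hp0 : 0 < p := hm.trans_le hmp
  rw [abs_of_nonpos (log_nonpos hm.le (hmp.trans hp)), abs_of_nonpos (log_nonpos hp0.le hp),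
    abs_of_nonpos (log_nonpos (div_pos hm hp0).le (div_le_one_of_le₀ hmp hp0.le)),
    log_div hm.ne' hp0.ne']
  ring

section Partition

variable {Ω : Type*} [MeasurableSpace Ω] {μ : Measure Ω} {B : ℕ → Set Ω}

theorem IsCountablePartition.tsum_measure (hB : IsCountablePartition μ B) :
    ∑' i, μ (B i) = μ Set.univ := by
  rw [← measure_iUnion hB.2.1 hB.1, hB.2.2]

theorem IsCountablePartition.tsum_measure_inter_s2 [IsFiniteMeasure μ]
    (hB : IsCountablePartition μ B) {s : Set Ω} (hs : MeasurableSet s) :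
    ∑' i, μ (B i ∩ s) = μ s := by
  have hnull : μ (⋃ i, B i)ᶜ = 0 := by
    rw [measure_compl (MeasurableSet.iUnion hB.1) (measure_ne_top μ _), hB.2.2, tsub_self]
  rw [← measure_iUnion (fun i j hij => (hB.2.1 hij).mono Set.inter_subset_left
    Set.inter_subset_left) fun i => (hB.1 i).inter hs, ← Set.iUnion_inter, Set.inter_comm,
    measure_inter_conull hnull]

end Partition

section InformationMoment

variable {Ω ι : Type*} [MeasurableSpace Ω] {μ : Measure Ω} {w : ℝ}

/-- `ℝ≥0∞`-valued versions of `Kw` and `KwCond`, in which no summability has to be tracked. -/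
noncomputable def informationMoment (μ : Measure Ω) (w : ℝ) (P : ι → Set Ω) : ℝ≥0∞ :=
  ∑' i, μ (P i) * ENNReal.ofReal |log (μ (P i)).toReal| ^ w

noncomputable def condInformationMoment (μ : Measure Ω) (w : ℝ) (B C : ℕ → Set Ω) : ℝ≥0∞ :=
  ∑' p : ℕ × ℕ, μ (B p.1 ∩ C p.2) *
    ENNReal.ofReal |log ((μ (B p.1 ∩ C p.2)).toReal / (μ (B p.1)).toReal)| ^ w

theorem informationMoment_eq_tsum_ofReal [IsFiniteMeasure μ] (hw : 0 ≤ w) (P : ι → Set Ω) :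
    informationMoment μ w P =
      ∑' i, ENNReal.ofReal ((μ (P i)).toReal * |log (μ (P i)).toReal| ^ w) :=
  tsum_congr fun _ => ENNReal.mul_ofReal_rpow (measure_ne_top μ _) (abs_nonneg _) hw

theorem toReal_informationMoment [IsFiniteMeasure μ] (hw : 0 ≤ w) (P : ι → Set Ω) :
    (informationMoment μ w P).toReal =
      ∑' i, (μ (P i)).toReal * |log (μ (P i)).toReal| ^ w := by
  rw [informationMoment_eq_tsum_ofReal hw, ENNReal.tsum_toReal_eq fun _ => ENNReal.ofReal_ne_top]
  exact tsum_congr fun _ => ENNReal.toReal_ofReal (by positivity)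

theorem informationMoment_ne_top [IsFiniteMeasure μ] (hw : 0 ≤ w) {P : ι → Set Ω}
    (hP : Summable fun i => (μ (P i)).toReal * |log (μ (P i)).toReal| ^ w) :
    informationMoment μ w P ≠ ∞ := by
  rw [informationMoment_eq_tsum_ofReal hw,
    ← ENNReal.ofReal_tsum_of_nonneg (fun _ => by positivity) hP]
  exact ENNReal.ofReal_ne_top

theorem informationMoment_inter_rpow_le_add_cond [IsProbabilityMeasure μ] (hw : 1 ≤ w)
    {B C : ℕ → Set Ω} (hB : ∀ i, MeasurableSet (B i)) (hC : IsCountablePartition μ C) :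
    informationMoment μ w (fun p : ℕ × ℕ => B p.1 ∩ C p.2) ^ (1 / w) ≤
      informationMoment μ w B ^ (1 / w) + condInformationMoment μ w B C ^ (1 / w) := by
  have hsplit : ∀ p : ℕ × ℕ,
      μ (B p.1 ∩ C p.2) * ENNReal.ofReal |log (μ (B p.1 ∩ C p.2)).toReal| ^ w ≤
        μ (B p.1 ∩ C p.2) * (ENNReal.ofReal |log (μ (B p.1)).toReal| +
          ENNReal.ofReal |log ((μ (B p.1 ∩ C p.2)).toReal / (μ (B p.1)).toReal)|) ^ w := by
    intro p
    rcases eq_or_ne (μ (B p.1 ∩ C p.2)) 0 with h0 | h0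
    · simp [h0]
    have hm : 0 < (μ (B p.1 ∩ C p.2)).toReal := ENNReal.toReal_pos h0 (measure_ne_top μ _)
    have hmp : (μ (B p.1 ∩ C p.2)).toReal ≤ (μ (B p.1)).toReal :=
      ENNReal.toReal_mono (measure_ne_top μ _) (measure_mono Set.inter_subset_left)
    have hp1 : (μ (B p.1)).toReal ≤ 1 := by
      simpa using ENNReal.toReal_mono ENNReal.one_ne_top (prob_le_one (μ := μ) (s := B p.1))
    rw [← ENNReal.ofReal_add (abs_nonneg _) (abs_nonneg _),
      ← abs_log_eq_abs_log_add_abs_log_div hm hmp hp1]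
  have hrow : ∑' p : ℕ × ℕ, μ (B p.1 ∩ C p.2) * ENNReal.ofReal |log (μ (B p.1)).toReal| ^ w =
      informationMoment μ w B := by
    rw [ENNReal.tsum_prod']
    refine tsum_congr fun i => ?_
    dsimp only
    rw [ENNReal.tsum_mul_right]
    congr 1
    simpa only [Set.inter_comm] using hC.tsum_measure_inter_s2 (hB i)
  refine (ENNReal.rpow_le_rpow (ENNReal.tsum_le_tsum hsplit) (by positivity)).trans ?_
  rw [← hrow]
  exact ENNReal.tsum_mul_add_rpow_le hw _ _ _

theorem condInformationMoment_le_informationMoment [IsProbabilityMeasure μ] (hw : 1 ≤ w)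
    {B C : ℕ → Set Ω} (hB : IsCountablePartition μ B) (hC : ∀ j, MeasurableSet (C j))
    (hCsmall : ∀ j, μ (C j) ≤ ENNReal.ofReal (exp (-w))) :
    condInformationMoment μ w B C ≤ informationMoment μ w C := by
  rw [condInformationMoment, ENNReal.tsum_prod', ENNReal.tsum_comm]
  refine ENNReal.tsum_le_tsum fun j => ?_
  have hsum := hB.tsum_measure_inter_s2 (hC j)
  have := tsum_mul_ofReal_abs_log_div_rpow_le hw (p := fun i => μ (B i))
    (m := fun i => μ (B i ∩ C j)) (by rw [hB.tsum_measure, measure_univ])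
    (fun _ => measure_mono Set.inter_subset_left) (hsum ▸ hCsmall j)
  rwa [hsum] at this

theorem informationMoment_inter_rpow_le [IsProbabilityMeasure μ] (hw : 1 ≤ w)
    {B C : ℕ → Set Ω} (hB : IsCountablePartition μ B) (hC : IsCountablePartition μ C)
    (hCsmall : ∀ j, μ (C j) ≤ ENNReal.ofReal (exp (-w))) :
    informationMoment μ w (fun p : ℕ × ℕ => B p.1 ∩ C p.2) ^ (1 / w) ≤
      informationMoment μ w B ^ (1 / w) + informationMoment μ w C ^ (1 / w) :=
  (informationMoment_inter_rpow_le_add_cond hw hB.1 hC).trans <| add_le_add le_rfl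
    (ENNReal.rpow_le_rpow (condInformationMoment_le_informationMoment hw hB hC.1 hCsmall)
      (by positivity))

end InformationMoment

theorem join_moment_le_sum_general {Ω : Type*} [MeasurableSpace Ω]
    (μ : Measure Ω) [IsProbabilityMeasure μ] (w : ℝ) (hw : 1 ≤ w)
    (B C : ℕ → Set Ω)
    (hB : IsCountablePartition μ B) (hC : IsCountablePartition μ C)
    (hCsmall : ∀ i, μ (C i) ≤ ENNReal.ofReal (Real.exp (-w)))
    (hKB : Summable fun i => (μ (B i)).toReal * |Real.log (μ (B i)).toReal| ^ w)
    (hKC : Summable fun i => (μ (C i)).toReal * |Real.log (μ (C i)).toReal| ^ w) :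
    KwJoin μ w B C ^ (1 / w) ≤ Kw μ w C ^ (1 / w) + Kw μ w B ^ (1 / w) := by
  have hw0 : 0 ≤ w := by linarith
  have hB_top := ENNReal.rpow_ne_top_of_nonneg (one_div_nonneg.2 hw0)
    (informationMoment_ne_top hw0 hKB)
  have hC_top := ENNReal.rpow_ne_top_of_nonneg (one_div_nonneg.2 hw0)
    (informationMoment_ne_top hw0 hKC)
  have key := ENNReal.toReal_mono (ENNReal.add_ne_top.2 ⟨hC_top, hB_top⟩)
    ((informationMoment_inter_rpow_le hw hB hC hCsmall).trans_eq (add_comm _ _))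
  rw [ENNReal.toReal_add hC_top hB_top, ← ENNReal.toReal_rpow, ← ENNReal.toReal_rpow,
    ← ENNReal.toReal_rpow, toReal_informationMoment hw0, toReal_informationMoment hw0,
    toReal_informationMoment hw0] at key
  exact key

theorem join_moment_le_sum {Ω : Type*} [MeasurableSpace Ω]
    (μ : Measure Ω) [IsProbabilityMeasure μ] (w : ℝ) (hw : 1 ≤ w)
    (B C : ℕ → Set Ω)
    (hB : IsCountablePartition μ B) (hC : IsCountablePartition μ C)
    (hBsmall : ∀ i, μ (B i) ≤ ENNReal.ofReal (Real.exp (-w)))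
    (hCsmall : ∀ i, μ (C i) ≤ ENNReal.ofReal (Real.exp (-w)))
    (hKB : Summable fun i => (μ (B i)).toReal * |Real.log (μ (B i)).toReal| ^ w)
    (hKC : Summable fun i => (μ (C i)).toReal * |Real.log (μ (C i)).toReal| ^ w) :
    KwJoin μ w B C ^ (1 / w) ≤ Kw μ w C ^ (1 / w) + Kw μ w B ^ (1 / w) :=
  join_moment_le_sum_general μ w hw B C hB hC hCsmall hKB hKC
end

section
/- For countable partitions B and C with finite second information moments, the conditional standard deviation satisfies σ(C|B) ≤ √K_2(C), i.e. Σ_{B,C} μ(B∩C)(log(μ(B)/μ(B∩C)) − H(C|B))² ≤ Σ_C μ(C) log² μ(C). -/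
open MeasureTheory

noncomputable section

variable {Ω : Type*} [MeasurableSpace Ω]

/-- Conditional entropy `H(C|B) = Σ_{B,C} −μ(B∩C) log(μ(B∩C)/μ(B))`. -/
def condEntropy' (μ : Measure Ω) (B C : ℕ → Set Ω) : ℝ :=
  ∑' p : ℕ × ℕ, -((μ (B p.1 ∩ C p.2)).toReal *
    Real.log ((μ (B p.1 ∩ C p.2)).toReal / (μ (B p.1)).toReal))

/-!
The centred second moment is at most the uncentred one, `Σ μ(B∩C) log²(μ(B)/μ(B∩C))`. On `[0, 1]`
the function `x ↦ x log² x` lies below its tangent line at any `c ≤ e⁻²`. Taking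
`x = μ(B∩C)/μ(B)` and `c = μ(C)` and summing, the linear terms contribute
`Σ_C μ(C) (log² μ(C) + 2 log μ(C))` and the constant terms `-2 Σ_C μ(C) log μ(C)`, which add up
to `K₂(C)`.
-/

open Real

/-- The tangent bound `mul_log_sq_le_tangent` in the variable `l = log x`, with `L = log c`: the
derivative `exp l * ((l - L) * (l + L + 2))` changes sign on `l ≤ 0` only at `L`. -/
lemma exp_mul_sq_sub_le {L l : ℝ} (hL : L ≤ -2) (hl : l ≤ 0) :
    exp l * (l ^ 2 - L ^ 2 - 2 * L) ≤ -2 * L * exp L := by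
  set g : ℝ → ℝ := fun t => exp t * (t ^ 2 - L ^ 2 - 2 * L)
  have hg' : ∀ t, HasDerivAt g (exp t * ((t - L) * (t + L + 2))) t := fun t =>
    ((hasDerivAt_exp t).fun_mul (((hasDerivAt_pow 2 t).sub_const _).sub_const _)).congr_deriv
      (by push_cast; ring)
  have hg : Continuous g := by fun_prop
  have hgL : g L = -2 * L * exp L := by
    simp only [g]
    ring
  rw [← hgL]
  rcases le_total l L with hlL | hLl
  · have hmono : MonotoneOn g (Set.Iic L) :=
      monotoneOn_of_hasDerivWithinAt_nonneg (convex_Iic L) hg.continuousOn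
        (fun t _ => (hg' t).hasDerivWithinAt) fun t ht => by
          rw [interior_Iic, Set.mem_Iio] at ht
          exact mul_nonneg (exp_pos t).le
            (mul_nonneg_of_nonpos_of_nonpos (by linarith) (by linarith))
    exact hmono hlL (Set.mem_Iic.2 le_rfl) hlL
  · have hanti : AntitoneOn g (Set.Icc L 0) :=
      antitoneOn_of_hasDerivWithinAt_nonpos (convex_Icc L 0) hg.continuousOn
        (fun t _ => (hg' t).hasDerivWithinAt) fun t ht => by
          rw [interior_Icc] at ht
          exact mul_nonpos_of_nonneg_of_nonpos (exp_pos t).le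
            (mul_nonpos_of_nonneg_of_nonpos (by linarith [ht.1]) (by linarith [ht.2]))
    exact hanti ⟨le_rfl, by linarith⟩ ⟨hLl, hl⟩ hLl

lemma mul_log_sq_le_tangent {x c : ℝ} (hx : 0 ≤ x) (hx1 : x ≤ 1) (hc : 0 < c)
    (hc2 : c ≤ exp (-2)) :
    x * log x ^ 2 ≤ (log c ^ 2 + 2 * log c) * x - 2 * c * log c := by
  have hL : log c ≤ -2 := (log_le_iff_le_exp hc).2 hc2
  rcases hx.eq_or_lt with rfl | hx0
  · simp only [zero_mul, mul_zero, zero_sub]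
    nlinarith
  · have h := exp_mul_sq_sub_le hL (log_nonpos hx hx1)
    rw [exp_log hx0, exp_log hc] at h
    linear_combination h

lemma mul_log_div_sq_le {p b c : ℝ} (hp : 0 ≤ p) (hpb : p ≤ b) (hpc : p ≤ c)
    (hc : c ≤ exp (-2)) :
    p * log (b / p) ^ 2 ≤ (log c ^ 2 + 2 * log c) * p + b * (-2 * c * log c) := by
  rcases hp.eq_or_lt with rfl | hp0
  · have hc1 : c ≤ 1 := hc.trans (exp_le_one_iff.2 (by norm_num))
    simp only [zero_mul, mul_zero, zero_add]
    nlinarith [mul_log_nonpos hpc hc1]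
  · have hb : 0 < b := hp0.trans_le hpb
    have h := mul_le_mul_of_nonneg_left
      (mul_log_sq_le_tangent (div_nonneg hp hb.le) ((div_le_one hb).2 hpb) (hp0.trans_le hpc) hc)
      hb.le
    rw [← inv_div, log_inv, neg_sq]
    calc p * log (p / b) ^ 2 = b * (p / b * log (p / b) ^ 2) := by field_simp
      _ ≤ _ := h
      _ = _ := by field_simp; ring

lemma hasSum_of_nonneg_of_hasSum_fiberwise {α β : Type*} {f : α × β → ℝ} {g : β → ℝ}
    {s : ℝ} (hf : 0 ≤ f) (hfg : ∀ b, HasSum (fun a => f (a, b)) (g b)) (hg : HasSum g s) :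
    HasSum f s := by
  rw [← (Equiv.prodComm β α).hasSum_iff]
  have hsum : Summable (f ∘ Equiv.prodComm β α) :=
    (summable_prod_of_nonneg (f := f ∘ Equiv.prodComm β α) fun q => hf _).2
      ⟨fun b => (hfg b).summable, by simpa [(hfg _).tsum_eq] using hg.summable⟩
  convert hsum.hasSum
  rw [hsum.tsum_prod]
  simp [(hfg _).tsum_eq, hg.tsum_eq]

lemma tsum_mul_sub_tsum_sq_le {α : Type*} {w X : α → ℝ} (hw0 : 0 ≤ w) (hw : HasSum w 1)
    (hX : Summable fun a => w a * X a ^ 2) :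
    ∑' a, w a * (X a - ∑' a, w a * X a) ^ 2 ≤ ∑' a, w a * X a ^ 2 := by
  set m := ∑' a, w a * X a
  have hwX : HasSum (fun a => w a * X a) m := by
    refine Summable.hasSum <| (hw.summable.add hX).of_norm_bounded fun a => ?_
    rw [Real.norm_eq_abs, abs_mul, abs_of_nonneg (hw0 a), ← mul_one_add]
    exact mul_le_mul_of_nonneg_left
      (by nlinarith [sq_abs (X a), sq_nonneg (|X a| - 1)]) (hw0 a)
  have hvar : HasSum (fun a => w a * (X a - m) ^ 2) (∑' a, w a * X a ^ 2 - m ^ 2) := by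
    rw [show ∑' a, w a * X a ^ 2 - m ^ 2 = ∑' a, w a * X a ^ 2 - 2 * m * m + m ^ 2 * 1 by ring]
    exact ((hX.hasSum.sub (hwX.mul_left (2 * m))).add (hw.mul_left (m ^ 2))).congr_fun
      fun a => by ring
  rw [hvar.tsum_eq]
  linarith [sq_nonneg m]

theorem tsum_mul_log_div_sub_sq_le {ι κ : Type*} {P : ι × κ → ℝ} {b : ι → ℝ}
    {c : κ → ℝ} (hP : 0 ≤ P) (hPb : ∀ q, P q ≤ b q.1) (hPc : ∀ j, HasSum (fun i => P (i, j)) (c j))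
    (hb : HasSum b 1) (hc : HasSum c 1) (hc2 : ∀ j, c j ≤ exp (-2))
    (hK : Summable fun j => c j * log (c j) ^ 2) :
    ∑' q, P q * (log (b q.1 / P q) - ∑' q, P q * log (b q.1 / P q)) ^ 2
      ≤ ∑' j, c j * log (c j) ^ 2 := by
  set T : ι × κ → ℝ := fun q =>
    (log (c q.2) ^ 2 + 2 * log (c q.2)) * P q + b q.1 * (-2 * c q.2 * log (c q.2))
  have hPT : ∀ q, P q * log (b q.1 / P q) ^ 2 ≤ T q := fun q =>
    mul_log_div_sq_le (hP q) (hPb q) (le_hasSum (hPc q.2) q.1 fun i _ => hP _) (hc2 q.2)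
  have hT : HasSum T (∑' j, c j * log (c j) ^ 2) := by
    refine hasSum_of_nonneg_of_hasSum_fiberwise
      (fun q => (mul_nonneg (hP q) (sq_nonneg _)).trans (hPT q)) (fun j => ?_) hK.hasSum
    rw [show c j * log (c j) ^ 2 = (log (c j) ^ 2 + 2 * log (c j)) * c j
      + 1 * (-2 * c j * log (c j)) by ring]
    exact ((hPc j).mul_left _).add (hb.mul_right _)
  have hF : Summable fun q => P q * log (b q.1 / P q) ^ 2 :=
    hT.summable.of_nonneg_of_le (fun q => mul_nonneg (hP q) (sq_nonneg _)) hPT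
  calc _ ≤ ∑' q, P q * log (b q.1 / P q) ^ 2 :=
        tsum_mul_sub_tsum_sq_le hP (hasSum_of_nonneg_of_hasSum_fiberwise hP hPc hc) hF
    _ ≤ ∑' q, T q := hF.tsum_le_tsum hPT hT.summable
    _ = _ := hT.tsum_eq

namespace IsCountablePartition

variable {μ : Measure Ω} {B : ℕ → Set Ω}

lemma hasSum_measure_inter [IsFiniteMeasure μ] (hB : IsCountablePartition μ B) {s : Set Ω}
    (hs : MeasurableSet s) : HasSum (fun i => (μ (B i ∩ s)).toReal) (μ s).toReal := by
  obtain ⟨hBm, hBd, hBu⟩ := hB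
  have hnull : μ (⋃ i, B i)ᶜ = 0 := by
    rw [measure_compl (.iUnion hBm) (measure_ne_top μ _), hBu, tsub_self]
  have h : ∑' i, μ (B i ∩ s) = μ s := by
    rw [← measure_iUnion
      (fun i j hij => (hBd hij).mono Set.inter_subset_left Set.inter_subset_left)
      (fun i => (hBm i).inter hs), ← Set.iUnion_inter, Set.inter_comm]
    exact measure_inter_conull hnull
  have := ENNReal.hasSum_toReal (h ▸ measure_ne_top μ s)
  rwa [← ENNReal.tsum_toReal_eq fun _ => measure_ne_top μ _, h] at this

lemma hasSum_measure [IsProbabilityMeasure μ] (hB : IsCountablePartition μ B) :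
    HasSum (fun i => (μ (B i)).toReal) 1 := by
  simpa using hB.hasSum_measure_inter MeasurableSet.univ

end IsCountablePartition

lemma condEntropy'_eq_tsum (μ : Measure Ω) (B C : ℕ → Set Ω) :
    condEntropy' μ B C = ∑' p : ℕ × ℕ, (μ (B p.1 ∩ C p.2)).toReal *
      log ((μ (B p.1)).toReal / (μ (B p.1 ∩ C p.2)).toReal) :=
  tsum_congr fun p => by rw [← inv_div, log_inv, mul_neg, neg_neg]

theorem cond_var_le_K2_general (μ : Measure Ω) [IsProbabilityMeasure μ]
    (B C : ℕ → Set Ω)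
    (hB : IsCountablePartition μ B) (hC : IsCountablePartition μ C)
    (hCsmall : ∀ i, μ (C i) ≤ ENNReal.ofReal (Real.exp (-2 : ℝ)))
    (hK2C : Summable fun i => (μ (C i)).toReal * (Real.log (μ (C i)).toReal) ^ 2) :
    (∑' p : ℕ × ℕ, (μ (B p.1 ∩ C p.2)).toReal *
        (Real.log ((μ (B p.1)).toReal / (μ (B p.1 ∩ C p.2)).toReal)
          - condEntropy' μ B C) ^ 2)
      ≤ ∑' j, (μ (C j)).toReal * (Real.log (μ (C j)).toReal) ^ 2 := by
  have hcol : ∀ j, HasSum (fun i => (μ (B i ∩ C j)).toReal) (μ (C j)).toReal :=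
    fun j => hB.hasSum_measure_inter (hC.1 j)
  rw [condEntropy'_eq_tsum]
  exact tsum_mul_log_div_sub_sq_le (P := fun q => (μ (B q.1 ∩ C q.2)).toReal)
    (b := fun i => (μ (B i)).toReal) (c := fun j => (μ (C j)).toReal)
    (fun _ => ENNReal.toReal_nonneg)
    (fun _ => ENNReal.toReal_mono (measure_ne_top μ _) (measure_mono Set.inter_subset_left))
    hcol hB.hasSum_measure hC.hasSum_measure
    (fun j => ENNReal.toReal_le_of_le_ofReal (exp_pos _).le (hCsmall j)) hK2C

theorem cond_var_le_K2 (μ : Measure Ω) [IsProbabilityMeasure μ]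
    (B C : ℕ → Set Ω)
    (hB : IsCountablePartition μ B) (hC : IsCountablePartition μ C)
    (hBsmall : ∀ i, μ (B i) ≤ ENNReal.ofReal (Real.exp (-2 : ℝ)))
    (hCsmall : ∀ i, μ (C i) ≤ ENNReal.ofReal (Real.exp (-2 : ℝ)))
    (hK2B : Summable fun i => (μ (B i)).toReal * (Real.log (μ (B i)).toReal) ^ 2)
    (hK2C : Summable fun i => (μ (C i)).toReal * (Real.log (μ (C i)).toReal) ^ 2) :
    (∑' p : ℕ × ℕ, (μ (B p.1 ∩ C p.2)).toReal *
        (Real.log ((μ (B p.1)).toReal / (μ (B p.1 ∩ C p.2)).toReal)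
          - condEntropy' μ B C) ^ 2)
      ≤ ∑' j, (μ (C j)).toReal * (Real.log (μ (C j)).toReal) ^ 2 :=
  cond_var_le_K2_general μ B C hB hC hCsmall hK2C

end
end

section
/- Let μ be the Bernoulli measure on Σ = ℕ^ℤ generated by weights (p_j) with Σ p_j = 1 and Σ p_j log² p_j < ∞. Then the limit σ² = lim_{n→∞} (K_2(A^n) − H(A^n)²)/n exists and equals (1/2) Σ_{i,j} p_i p_j log²(p_i/p_j), where A is the canonical one-coordinate partition. -/
/-!
Under the product weights `∏ j, p (a j)` the information function `-log ∏ j, p (a j)` of a word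
`a` is a sum of `n` independent copies of `-log p`, so its first two moments are `-H(A^n) = n m₁`
and `K₂(A^n) = n m₂ + n (n - 1) m₁²`, where `m₁ = ∑ p log p` and `m₂ = ∑ p log² p`. Hence
`(K₂(A^n) - H(A^n)²) / n = m₂ - m₁²` for every `n ≥ 1`, and expanding the square in
`log (p i / p j) = log p i - log p j` shows that `m₂ - m₁²` is half the double sum.
-/

open MeasureTheory

/-- Cylinder set in `ℕ^ℤ` fixing coordinates `0, …, n−1` to the word `a`;
these are exactly the atoms of the join `A^n` for the shift and the
zero-coordinate partition `A`. -/
def cyl (n : ℕ) (a : Fin n → ℕ) : Set (ℤ → ℕ) :=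
  {x | ∀ j : Fin n, x (j : ℤ) = a j}

/-- `H(A^n)` for the Bernoulli measure. -/
noncomputable def Hn (μ : Measure (ℤ → ℕ)) (n : ℕ) : ℝ :=
  ∑' a : Fin n → ℕ, -((μ (cyl n a)).toReal * Real.log (μ (cyl n a)).toReal)

/-- `K_2(A^n)` for the Bernoulli measure. -/
noncomputable def K2n (μ : Measure (ℤ → ℕ)) (n : ℕ) : ℝ :=
  ∑' a : Fin n → ℕ, (μ (cyl n a)).toReal * (Real.log (μ (cyl n a)).toReal) ^ 2

open Real

section LogMoments

variable {ι κ : Type*}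

theorem HasSum.mul_prod_real {f : ι → ℝ} {g : κ → ℝ} {s t : ℝ} (hf : HasSum f s)
    (hg : HasSum g t) : HasSum (fun x : ι × κ => f x.1 * g x.2) (s * t) :=
  hf.mul hg <| summable_mul_of_summable_norm (by simpa using hf.summable.abs)
    (by simpa using hg.summable.abs)

theorem Summable.mul_of_summable_mul_sq {f g : ι → ℝ} (hf₀ : ∀ i, 0 ≤ f i) (hf : Summable f)
    (hfg : Summable fun i => f i * g i ^ 2) : Summable fun i => f i * g i := by
  refine (hf.add hfg).of_norm_bounded fun i => ?_
  have habs : |g i| ≤ 1 + g i ^ 2 := by nlinarith [sq_abs (g i), abs_nonneg (g i)]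
  calc ‖f i * g i‖ = f i * |g i| := by rw [Real.norm_eq_abs, abs_mul, abs_of_nonneg (hf₀ i)]
    _ ≤ f i * (1 + g i ^ 2) := mul_le_mul_of_nonneg_left habs (hf₀ i)
    _ = f i + f i * g i ^ 2 := by ring

theorem mul_mul_log_mul (a b : ℝ) : a * b * log (a * b) = a * log a * b + a * (b * log b) := by
  rcases eq_or_ne a 0 with rfl | ha; · simp
  rcases eq_or_ne b 0 with rfl | hb; · simp
  rw [log_mul ha hb]; ring

theorem mul_mul_log_mul_sq (a b : ℝ) :
    a * b * log (a * b) ^ 2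
      = a * log a ^ 2 * b + 2 * (a * log a * (b * log b)) + a * (b * log b ^ 2) := by
  rcases eq_or_ne a 0 with rfl | ha; · simp
  rcases eq_or_ne b 0 with rfl | hb; · simp
  rw [log_mul ha hb]; ring

theorem mul_mul_log_div_sq (a b : ℝ) :
    a * b * log (a / b) ^ 2
      = a * log a ^ 2 * b + a * (b * log b ^ 2) - 2 * (a * log a * (b * log b)) := by
  rcases eq_or_ne a 0 with rfl | ha; · simp
  rcases eq_or_ne b 0 with rfl | hb; · simp
  rw [log_div ha hb]; ring

/-- For the atom masses `w` of a partition, `m₁ = -H` and `m₂ = K₂`. -/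
structure HasLogMoments (w : ι → ℝ) (m₁ m₂ : ℝ) : Prop where
  total : HasSum w 1
  first : HasSum (fun i => w i * log (w i)) m₁
  second : HasSum (fun i => w i * log (w i) ^ 2) m₂

theorem HasLogMoments.of_comp_equiv {w : ι → ℝ} {m₁ m₂ : ℝ} (e : κ ≃ ι)
    (h : HasLogMoments (w ∘ e) m₁ m₂) : HasLogMoments w m₁ m₂ :=
  ⟨e.hasSum_iff.1 h.total, e.hasSum_iff.1 h.first, e.hasSum_iff.1 h.second⟩

theorem HasLogMoments.prod {w : ι → ℝ} {v : κ → ℝ} {m₁ m₂ n₁ n₂ : ℝ}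
    (hw : HasLogMoments w m₁ m₂) (hv : HasLogMoments v n₁ n₂) :
    HasLogMoments (fun x : ι × κ => w x.1 * v x.2) (m₁ + n₁) (m₂ + 2 * (m₁ * n₁) + n₂) where
  total := by simpa using hw.total.mul_prod_real hv.total
  first := by
    convert (hw.first.mul_prod_real hv.total).add (hw.total.mul_prod_real hv.first) using 1
    · exact funext fun x => mul_mul_log_mul _ _
    · ring
  second := by
    convert ((hw.second.mul_prod_real hv.total).add
      ((hw.first.mul_prod_real hv.first).mul_left 2)).add
      (hw.total.mul_prod_real hv.second) using 1
    · exact funext fun x => mul_mul_log_mul_sq _ _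
    · ring

theorem HasLogMoments.pi {w : ι → ℝ} {m₁ m₂ : ℝ} (hw : HasLogMoments w m₁ m₂) (n : ℕ) :
    HasLogMoments (fun a : Fin n → ι => ∏ j, w (a j)) (n * m₁)
      (n * m₂ + n * (n - 1) * m₁ ^ 2) := by
  induction n with
  | zero => constructor <;> simp
  | succ n ih =>
    refine .of_comp_equiv (Fin.consEquiv fun _ => ι) ?_
    convert hw.prod ih using 1
    · exact funext fun x => Fin.prod_univ_succ _
    · push_cast; ring
    · push_cast; ring

theorem HasLogMoments.hasSum_mul_log_div_sq {w : ι → ℝ} {m₁ m₂ : ℝ} (hw : HasLogMoments w m₁ m₂) :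
    HasSum (fun x : ι × ι => w x.1 * w x.2 * log (w x.1 / w x.2) ^ 2) (2 * (m₂ - m₁ ^ 2)) := by
  have h := ((hw.second.mul_prod_real hw.total).add (hw.total.mul_prod_real hw.second)).sub
    ((hw.first.mul_prod_real hw.first).mul_left 2)
  rw [show 2 * (m₂ - m₁ ^ 2) = m₂ * 1 + 1 * m₂ - 2 * (m₁ * m₁) by ring]
  simpa only [mul_mul_log_div_sq] using h

end LogMoments

theorem bernoulli_variance_general (p : ℕ → ℝ) (hp : ∀ j, 0 < p j)
    (hsum : ∑' j, p j = 1)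
    (hlog2 : Summable fun j => p j * (Real.log (p j)) ^ 2)
    (μ : Measure (ℤ → ℕ))
    (hcyl : ∀ (n : ℕ) (a : Fin n → ℕ),
      μ (cyl n a) = ENNReal.ofReal (∏ j : Fin n, p (a j))) :
    Filter.Tendsto (fun n : ℕ => (K2n μ n - (Hn μ n) ^ 2) / n) Filter.atTop
      (nhds ((1 / 2) * ∑' q : ℕ × ℕ,
        p q.1 * p q.2 * (Real.log (p q.1 / p q.2)) ^ 2)) := by
  have hps : Summable p := by
    by_contra h
    simp [tsum_eq_zero_of_not_summable h] at hsum
  have hp_log : HasLogMoments p (∑' j, p j * log (p j)) (∑' j, p j * log (p j) ^ 2) :=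
    ⟨hsum ▸ hps.hasSum, (hps.mul_of_summable_mul_sq (fun j => (hp j).le) hlog2).hasSum,
      hlog2.hasSum⟩
  set m₁ := ∑' j, p j * log (p j)
  set m₂ := ∑' j, p j * log (p j) ^ 2
  have hmass (n : ℕ) (a : Fin n → ℕ) : (μ (cyl n a)).toReal = ∏ j, p (a j) := by
    rw [hcyl, ENNReal.toReal_ofReal (Finset.prod_nonneg fun j _ => (hp (a j)).le)]
  have hH (n : ℕ) : Hn μ n = -(n * m₁) := by
    simpa only [Hn, hmass] using ((hp_log.pi n).first.neg).tsum_eq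
  have hK (n : ℕ) : K2n μ n = n * m₂ + n * (n - 1) * m₁ ^ 2 := by
    simpa only [K2n, hmass] using (hp_log.pi n).second.tsum_eq
  rw [hp_log.hasSum_mul_log_div_sq.tsum_eq, one_div_mul_eq_div, mul_div_cancel_left₀ _ two_ne_zero]
  refine tendsto_const_nhds.congr' <| Filter.eventually_atTop.2 ⟨1, fun n hn => ?_⟩
  have hn₀ : (n : ℝ) ≠ 0 := by positivity
  simp only [hK, hH]
  field_simp
  ring

/-- For the Bernoulli measure with weights `p`, the limit
`σ² = lim (K_2(A^n) − H(A^n)²)/n` exists and equals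
`(1/2) Σ_{i,j} p_i p_j log²(p_i/p_j)`. -/
theorem bernoulli_variance (p : ℕ → ℝ) (hp : ∀ j, 0 < p j)
    (hsum : ∑' j, p j = 1)
    (hlog2 : Summable fun j => p j * (Real.log (p j)) ^ 2)
    (μ : Measure (ℤ → ℕ)) [IsProbabilityMeasure μ]
    (hcyl : ∀ (n : ℕ) (a : Fin n → ℕ),
      μ (cyl n a) = ENNReal.ofReal (∏ j : Fin n, p (a j))) :
    Filter.Tendsto (fun n : ℕ => (K2n μ n - (Hn μ n) ^ 2) / n) Filter.atTop
      (nhds ((1 / 2) * ∑' q : ℕ × ℕ,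
        p q.1 * p q.2 * (Real.log (p q.1 / p q.2)) ^ 2)) :=
  bernoulli_variance_general p hp hsum hlog2 μ hcyl
end

section
/- Let B, C be countable partitions with Σ_{B,C} |ρ(B,C)| ≤ β, K_4(B), K_4(C) < ∞, and L^c = {(B,C): μ(B∩C) < 2μ(B)μ(C)}. Then |Σ_{(B,C)∈L^c} ρ(B,C) J_B(B) J_C(C)| ≤ β^{1/2} σ(B) σ(C), where σ(B)² = Σ μ(B)J_B(B)² and ρ(B,C) = μ(B∩C) − μ(B)μ(C). -/
open MeasureTheory
open scoped Classical

noncomputable section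

variable {Ω : Type*} [MeasurableSpace Ω]

/-- Entropy `H(B)`. -/
def entropy (μ : Measure Ω) (B : ℕ → Set Ω) : ℝ :=
  ∑' i, -((μ (B i)).toReal * Real.log (μ (B i)).toReal)

/-- Centered information function `J_B(B) = −log μ(B) − H(B)` on the atom `B i`. -/
def Jinfo (μ : Measure Ω) (B : ℕ → Set Ω) (i : ℕ) : ℝ :=
  -Real.log (μ (B i)).toReal - entropy μ B

/-- `ρ(B,C) = μ(B∩C) − μ(B)μ(C)`. -/
def rho (μ : Measure Ω) (B C : Set Ω) : ℝ :=
  (μ (B ∩ C)).toReal - (μ B).toReal * (μ C).toReal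

/-- Standard deviation `σ(B)` of the centered information function. -/
def sigmaInfo (μ : Measure Ω) (B : ℕ → Set Ω) : ℝ :=
  Real.sqrt (∑' i, (μ (B i)).toReal * (Jinfo μ B i) ^ 2)

/-! On `L^c` one has `|ρ(B,C)| ≤ μ(B)μ(C)`, so each term is bounded by
`√|ρ(B,C)| · √(μ(B)J_B(B)² · μ(C)J_C(C)²)`. Cauchy–Schwarz over the pairs `(B,C)` bounds the sum
by `√(Σ|ρ|)` times `√(σ(B)² σ(C)²)`, the second factor because the double sum of the product
weights factorizes. -/

theorem abs_tsum_le_sqrt_mul_sqrt_of_abs_le {ι : Type*} {f a b : ι → ℝ}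
    (ha₀ : ∀ i, 0 ≤ a i) (hb₀ : ∀ i, 0 ≤ b i) (ha : Summable a) (hb : Summable b)
    (hf : ∀ i, |f i| ≤ √(a i) * √(b i)) :
    |∑' i, f i| ≤ √(∑' i, a i) * √(∑' i, b i) := by
  have hsq : ∀ {g : ι → ℝ}, (∀ i, 0 ≤ g i) → (fun i => √(g i) ^ (2 : ℝ)) = g := fun hg =>
    funext fun i => by rw [Real.rpow_two, Real.sq_sqrt (hg i)]
  obtain ⟨hab, hCS⟩ := Real.summable_and_inner_le_Lp_mul_Lq_tsum_of_nonneg .two_two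
    (fun i => Real.sqrt_nonneg (a i)) (fun i => Real.sqrt_nonneg (b i))
    (by rwa [hsq ha₀]) (by rwa [hsq hb₀])
  rw [hsq ha₀, hsq hb₀, ← Real.sqrt_eq_rpow, ← Real.sqrt_eq_rpow] at hCS
  have hfs : Summable fun i => |f i| := hab.of_nonneg_of_le (fun i => abs_nonneg _) hf
  calc |∑' i, f i| ≤ ∑' i, |f i| := by
        simpa using norm_tsum_le_tsum_norm (f := f) (by simpa using hfs)
    _ ≤ ∑' i, √(a i) * √(b i) := hfs.tsum_le_tsum hf hab
    _ ≤ √(∑' i, a i) * √(∑' i, b i) := hCS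

theorem abs_mul_mul_le_sqrt_mul_sqrt {r x y u v : ℝ} (hx : 0 ≤ x) (hy : 0 ≤ y)
    (hr : |r| ≤ x * y) :
    |r * u * v| ≤ √|r| * √(x * u ^ 2 * (y * v ^ 2)) := by
  have hxy : √|r| ≤ √(x * y) := Real.sqrt_le_sqrt hr
  calc |r * u * v| = √|r| * √|r| * (|u| * |v|) := by
        rw [Real.mul_self_sqrt (abs_nonneg r), abs_mul, abs_mul, mul_assoc]
    _ ≤ √|r| * √(x * y) * (|u| * |v|) := by gcongr
    _ = √|r| * √(x * u ^ 2 * (y * v ^ 2)) := by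
        rw [show x * u ^ 2 * (y * v ^ 2) = x * y * (u * v) ^ 2 by ring,
          Real.sqrt_mul (mul_nonneg hx hy), Real.sqrt_sq_eq_abs, abs_mul, mul_assoc]

theorem summable_mul_sub_sq_of_summable_mul_pow_four {ι : Type*} {w g : ι → ℝ}
    (hw₀ : ∀ i, 0 ≤ w i) (hw : Summable w) (hg : Summable fun i => w i * g i ^ 4) (c : ℝ) :
    Summable fun i => w i * (c - g i) ^ 2 := by
  refine .of_nonneg_of_le (fun i => mul_nonneg (hw₀ i) (sq_nonneg _)) (fun i => ?_)
    ((hg.mul_left 2).add (hw.mul_left (2 * c ^ 2 + 1)))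
  -- `(c - g)² ≤ 2 c² + 2 g²` and `2 g² ≤ 2 g⁴ + 1/2`
  linear_combination mul_nonneg (hw₀ i) (sq_nonneg (c + g i)) +
    (1 / 2) * mul_nonneg (hw₀ i) (sq_nonneg (2 * g i ^ 2 - 1)) + (1 / 2) * hw₀ i

variable {μ : Measure Ω}

theorem summable_toReal_mul_Jinfo_sq [IsFiniteMeasure μ] {B : ℕ → Set Ω}
    (hB : ∀ i, MeasurableSet (B i)) (hdisj : Pairwise (Function.onFun Disjoint B))
    (hK4 : Summable fun i => (μ (B i)).toReal * (Real.log (μ (B i)).toReal) ^ 4) :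
    Summable fun i => (μ (B i)).toReal * Jinfo μ B i ^ 2 :=
  (summable_mul_sub_sq_of_summable_mul_pow_four (fun _ => ENNReal.toReal_nonneg)
    (summable_measure_toReal hB hdisj) hK4 (-entropy μ B)).congr fun i => by
      rw [Jinfo]; ring

theorem abs_rho_le_of_lt_two_mul {B C : Set Ω}
    (h : (μ (B ∩ C)).toReal < 2 * (μ B).toReal * (μ C).toReal) :
    |rho μ B C| ≤ (μ B).toReal * (μ C).toReal := by
  rw [rho, abs_le]
  constructor <;> linarith [(μ (B ∩ C)).toReal_nonneg]

theorem Rminus_bound (μ : Measure Ω) [IsProbabilityMeasure μ]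
    (B C : ℕ → Set Ω) (β : ℝ)
    (hB : IsCountablePartition μ B) (hC : IsCountablePartition μ C)
    (hρsum : Summable fun p : ℕ × ℕ => |rho μ (B p.1) (C p.2)|)
    (hρβ : (∑' p : ℕ × ℕ, |rho μ (B p.1) (C p.2)|) ≤ β)
    (hK4B : Summable fun i => (μ (B i)).toReal * (Real.log (μ (B i)).toReal) ^ 4)
    (hK4C : Summable fun j => (μ (C j)).toReal * (Real.log (μ (C j)).toReal) ^ 4) :
    |∑' p : ℕ × ℕ,
        (if (μ (B p.1 ∩ C p.2)).toReal < 2 * (μ (B p.1)).toReal * (μ (C p.2)).toReal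
          then rho μ (B p.1) (C p.2) * Jinfo μ B p.1 * Jinfo μ C p.2 else 0)|
      ≤ β ^ ((1 : ℝ) / 2) * sigmaInfo μ B * sigmaInfo μ C := by
  set c := fun i => (μ (B i)).toReal * Jinfo μ B i ^ 2
  set d := fun j => (μ (C j)).toReal * Jinfo μ C j ^ 2
  have hc : Summable c := summable_toReal_mul_Jinfo_sq hB.1 hB.2.1 hK4B
  have hd : Summable d := summable_toReal_mul_Jinfo_sq hC.1 hC.2.1 hK4C
  have hcd : Summable fun p : ℕ × ℕ => c p.1 * d p.2 :=
    hc.mul_of_nonneg hd (fun _ => by positivity) (fun _ => by positivity)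
  calc _ ≤ √(∑' p : ℕ × ℕ, |rho μ (B p.1) (C p.2)|) * √(∑' p : ℕ × ℕ, c p.1 * d p.2) := by
        refine abs_tsum_le_sqrt_mul_sqrt_of_abs_le (fun _ => abs_nonneg _)
          (fun _ => by positivity) hρsum hcd fun p => ?_
        split_ifs with hL
        · exact abs_mul_mul_le_sqrt_mul_sqrt ENNReal.toReal_nonneg ENNReal.toReal_nonneg
            (abs_rho_le_of_lt_two_mul hL)
        · rw [abs_zero]
          positivity
    _ ≤ √β * (sigmaInfo μ B * sigmaInfo μ C) := by
        rw [← hc.tsum_mul_tsum hd hcd, Real.sqrt_mul (tsum_nonneg fun _ => by positivity)]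
        exact mul_le_mul_of_nonneg_right (Real.sqrt_le_sqrt hρβ) (by positivity)
    _ = β ^ ((1 : ℝ) / 2) * sigmaInfo μ B * sigmaInfo μ C := by
        rw [Real.sqrt_eq_rpow, mul_assoc]

end
end

section
/- Let (n_j) be defined by n_{j+1} = 2n_j + ⌊n_j^α⌋ for 0 < α < 1 and n_0 ≥ 1. Then 2^j n_0 ≤ n_j ≤ 2^j n_0 · exp(c / n_0^{1−α}) for some constant c depending only on α. -/
/-- Growth of the recursion `n_{j+1} = 2 n_j + ⌊n_j^α⌋`:
`2^j n_0 ≤ n_j ≤ 2^j n_0 exp(c / n_0^{1−α})` for a constant `c = c(α)`. -/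
theorem recursion_growth (α : ℝ) (hα0 : 0 < α) (hα1 : α < 1) :
    ∃ c : ℝ, 0 < c ∧ ∀ n : ℕ → ℕ, 1 ≤ n 0 →
      (∀ j : ℕ, n (j + 1) = 2 * n j + ⌊(n j : ℝ) ^ α⌋₊) →
      ∀ j : ℕ, (2 ^ j * n 0 : ℝ) ≤ (n j : ℝ) ∧
        (n j : ℝ) ≤ 2 ^ j * (n 0 : ℝ) * Real.exp (c / (n 0 : ℝ) ^ (1 - α)) := by
  set r : ℝ := (2:ℝ) ^ (α - 1) with hrdef
  have hr1 : r < 1 :=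
    Real.rpow_lt_one_of_one_lt_of_neg (by norm_num) (by linarith)
  have hrpos : 0 < r := Real.rpow_pos_of_pos (by norm_num) _
  refine ⟨(1/2) * (1 - r)⁻¹, by
    have : (0:ℝ) < 1 - r := by linarith
    positivity, ?_⟩
  intro n hn0 hrec j
  have hN0 : (1:ℝ) ≤ (n 0 : ℝ) := by exact_mod_cast hn0
  have hN0pos : (0:ℝ) < (n 0 : ℝ) := by linarith
  -- strengthened induction
  have key : ∀ j, ((2:ℝ) ^ j * n 0 ≤ (n j : ℝ)) ∧
      (n j : ℝ) ≤ 2 ^ j * (n 0 : ℝ) *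
        Real.exp (∑ i ∈ Finset.range j, (1/2) * r ^ i * (n 0 : ℝ) ^ (α - 1)) := by
    intro j
    induction j with
    | zero => simp
    | succ j ih =>
      obtain ⟨hlo, hhi⟩ := ih
      have hbase : (0:ℝ) < (2:ℝ) ^ j * n 0 := by positivity
      have hnjpos : (0:ℝ) < (n j : ℝ) := lt_of_lt_of_le hbase hlo
      have hcast : (n (j+1) : ℝ) = 2 * (n j : ℝ) + (⌊(n j : ℝ) ^ α⌋₊ : ℝ) := by
        rw [hrec j]; push_cast; ring
      constructor
      · have : (0:ℝ) ≤ (⌊(n j : ℝ) ^ α⌋₊ : ℝ) := Nat.cast_nonneg _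
        rw [hcast]
        calc (2:ℝ) ^ (j+1) * n 0 = 2 * ((2:ℝ) ^ j * n 0) := by ring
        _ ≤ 2 * (n j : ℝ) := by linarith
        _ ≤ _ := by linarith
      · have hfloor : (⌊(n j : ℝ) ^ α⌋₊ : ℝ) ≤ (n j : ℝ) ^ α :=
          Nat.floor_le (by positivity)
        have hsplit : (n j : ℝ) ^ α = (n j : ℝ) * (n j : ℝ) ^ (α - 1) := by
          rw [show α = 1 + (α - 1) by ring, Real.rpow_add hnjpos, Real.rpow_one]
          ring_nf
        have hmono : (n j : ℝ) ^ (α - 1) ≤ ((2:ℝ) ^ j * n 0) ^ (α - 1) :=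
          Real.rpow_le_rpow_of_nonpos hbase hlo (by linarith)
        have hfact : ((2:ℝ) ^ j * n 0) ^ (α - 1) = r ^ j * (n 0 : ℝ) ^ (α - 1) := by
          rw [Real.mul_rpow (by positivity) (by positivity)]
          congr 1
          rw [hrdef, ← Real.rpow_natCast (2:ℝ) j, ← Real.rpow_natCast ((2:ℝ) ^ (α-1)) j,
            ← Real.rpow_mul (by norm_num), ← Real.rpow_mul (by norm_num)]
          ring_nf
        set t : ℝ := (1/2) * r ^ j * (n 0 : ℝ) ^ (α - 1) with htdef
        have htpos : 0 < t := by positivity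
        have hstep : (n (j+1) : ℝ) ≤ 2 * (n j : ℝ) * (1 + t) := by
          rw [hcast]
          have : (n j : ℝ) ^ α ≤ (n j : ℝ) * (r ^ j * (n 0 : ℝ) ^ (α - 1)) := by
            rw [hsplit]
            exact mul_le_mul_of_nonneg_left (by rw [← hfact]; exact hmono) hnjpos.le
          nlinarith [hnjpos]
        have hexp : (1:ℝ) + t ≤ Real.exp t := by linarith [Real.add_one_le_exp t]
        calc (n (j+1) : ℝ) ≤ 2 * (n j : ℝ) * (1 + t) := hstep
          _ ≤ 2 * (2 ^ j * (n 0:ℝ) * Real.exp (∑ i ∈ Finset.range j, (1/2) * r ^ i * (n 0:ℝ) ^ (α-1))) * (1 + t) := by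
              have h1t : (0:ℝ) ≤ 1 + t := by linarith
              nlinarith [hhi, hnjpos]
          _ ≤ 2 * (2 ^ j * (n 0:ℝ) * Real.exp (∑ i ∈ Finset.range j, (1/2) * r ^ i * (n 0:ℝ) ^ (α-1))) * Real.exp t := by
              have := Real.exp_pos (∑ i ∈ Finset.range j, (1/2) * r ^ i * (n 0:ℝ) ^ (α-1))
              nlinarith [hexp]
          _ = 2 ^ (j+1) * (n 0:ℝ) * Real.exp (∑ i ∈ Finset.range (j+1), (1/2) * r ^ i * (n 0:ℝ) ^ (α-1)) := by
              rw [Finset.sum_range_succ, Real.exp_add]; ring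
  refine ⟨(key j).1, (key j).2.trans ?_⟩
  have hsum : (∑ i ∈ Finset.range j, (1/2) * r ^ i * (n 0:ℝ) ^ (α-1)) ≤
      (1/2) * (1 - r)⁻¹ / (n 0:ℝ) ^ (1 - α) := by
    have hgeom : (∑ i ∈ Finset.range j, r ^ i) ≤ (1 - r)⁻¹ := by
      rw [geom_sum_eq hr1.ne]
      have hrj : (0:ℝ) ≤ r ^ j := by positivity
      have h1r : (0:ℝ) < 1 - r := by linarith
      have : (r ^ j - 1) / (r - 1) = (1 - r ^ j) / (1 - r) := by
        rw [div_eq_div_iff (by linarith) (by linarith)]; ring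
      rw [this, div_le_iff₀ h1r, inv_mul_cancel₀ h1r.ne']
      linarith
    have hpow : (n 0:ℝ) ^ (α - 1) = ((n 0:ℝ) ^ (1 - α))⁻¹ := by
      rw [show α - 1 = -(1 - α) by ring, Real.rpow_neg hN0pos.le]
    calc (∑ i ∈ Finset.range j, (1/2) * r ^ i * (n 0:ℝ) ^ (α-1))
        = (1/2) * (n 0:ℝ) ^ (α-1) * (∑ i ∈ Finset.range j, r ^ i) := by
          rw [Finset.mul_sum]; exact Finset.sum_congr rfl fun i _ => by ring
      _ ≤ (1/2) * (n 0:ℝ) ^ (α-1) * (1 - r)⁻¹ := by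
          have : (0:ℝ) ≤ (1/2) * (n 0:ℝ) ^ (α-1) := by positivity
          exact mul_le_mul_of_nonneg_left hgeom this
      _ = (1/2) * (1 - r)⁻¹ / (n 0:ℝ) ^ (1 - α) := by
          rw [hpow]; field_simp
  exact mul_le_mul_of_nonneg_left (Real.exp_le_exp.mpr hsum) (by positivity)
end

section
/- Define n_j = ⌊√j⌋ and Q_n as the largest Q with Σ_{j=1}^{Q}(n_j + ⌊n_j^α⌋) ≤ n, for fixed α ∈ (0,1). Then Q_n ≍ n^{2/3}, and n − Σ_{j=1}^{Q_n} n_j = O(n^{(α+2)/3}). -/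
/-- Block lengths `n_j = ⌊√j⌋`. -/
def blockLen (j : ℕ) : ℕ := Nat.sqrt j

/-- Gap lengths `Δ_j = ⌊n_j^α⌋`. -/
noncomputable def gapLen (α : ℝ) (j : ℕ) : ℕ := ⌊(Nat.sqrt j : ℝ) ^ α⌋₊

/-- `N_{Q+1} = Σ_{j=1}^{Q} (n_j + Δ_j)`. -/
noncomputable def blockSum (α : ℝ) (Q : ℕ) : ℕ :=
  ∑ j ∈ Finset.Icc 1 Q, (blockLen j + gapLen α j)

/-- `Q_n`: the largest `Q` with `Σ_{j=1}^{Q}(n_j + Δ_j) ≤ n`. -/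
noncomputable def Qn (α : ℝ) (n : ℕ) : ℕ :=
  Nat.findGreatest (fun Q => blockSum α Q ≤ n) n

/-!
Since `Δ_j ≤ n_j`, the partial sums `N(Q) = Σ_{j ≤ Q} (n_j + Δ_j)` satisfy `N(Q)² ≤ 4 Q³`, while
the blocks with `Q/2 < j ≤ Q` alone give `Q³ ≤ 108 N(Q)²`. As `Q_n` is the largest `Q` with
`N(Q) ≤ n`, this yields `Q_n ≍ n^{2/3}`. The remainder `n - Σ_{j ≤ Q_n} n_j` is less than
`N(Q_n + 1) - Σ_{j ≤ Q_n} n_j`, i.e. one block plus `Q_n + 1` gaps, each at most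
`n_{Q_n+1}^α = O(n^{α/3})`. Writing `n = t³` turns all bounds into inequalities between
polynomials in `t` and `t^α`.
-/

section
variable {α : ℝ}

lemma one_le_blockLen {j : ℕ} (hj : j ≠ 0) : 1 ≤ blockLen j :=
  Nat.sqrt_pos.2 (Nat.pos_of_ne_zero hj)

lemma gapLen_le_blockLen (hα : α ≤ 1) {j : ℕ} (hj : j ≠ 0) : gapLen α j ≤ blockLen j := by
  have h1 : (1 : ℝ) ≤ blockLen j := by exact_mod_cast one_le_blockLen hj
  refine Nat.floor_le_of_le ?_
  simpa [gapLen, blockLen] using Real.rpow_le_rpow_of_exponent_le h1 hα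

lemma gapLen_le_rpow_blockLen (hα : 0 ≤ α) {j k : ℕ} (hjk : j ≤ k) :
    (gapLen α j : ℝ) ≤ (blockLen k : ℝ) ^ α :=
  (Nat.floor_le (by positivity)).trans <|
    Real.rpow_le_rpow (by positivity) (by exact_mod_cast Nat.sqrt_le_sqrt hjk) hα

lemma blockSum_mono : Monotone (blockSum α) := fun _ _ h =>
  Finset.sum_le_sum_of_subset (Finset.Icc_subset_Icc_right h)

lemma le_blockSum (Q : ℕ) : Q ≤ blockSum α Q := by
  calc Q = ∑ _j ∈ Finset.Icc 1 Q, 1 := by simp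
    _ ≤ blockSum α Q := Finset.sum_le_sum fun j hj =>
      (one_le_blockLen (Nat.one_le_iff_ne_zero.1 (Finset.mem_Icc.1 hj).1)).trans
        (Nat.le_add_right _ _)

lemma blockSum_le (hα : α ≤ 1) (Q : ℕ) : blockSum α Q ≤ 2 * Q * blockLen Q := by
  calc blockSum α Q ≤ ∑ _j ∈ Finset.Icc 1 Q, 2 * blockLen Q := Finset.sum_le_sum fun j hj => by
        obtain ⟨hj1, hjQ⟩ := Finset.mem_Icc.1 hj
        have hgap : gapLen α j ≤ blockLen j := gapLen_le_blockLen hα (by omega)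
        have hblock : blockLen j ≤ blockLen Q := Nat.sqrt_le_sqrt hjQ
        omega
    _ = 2 * Q * blockLen Q := by
        simp only [Finset.sum_const, Nat.card_Icc, Nat.add_sub_cancel, smul_eq_mul]; ring

lemma blockSum_sq_le (hα : α ≤ 1) (Q : ℕ) : blockSum α Q ^ 2 ≤ 4 * Q ^ 3 := by
  have hs : blockLen Q ^ 2 ≤ Q := Nat.sqrt_le' Q
  calc blockSum α Q ^ 2 ≤ (2 * Q * blockLen Q) ^ 2 := Nat.pow_le_pow_left (blockSum_le hα Q) 2
    _ = 4 * Q ^ 2 * blockLen Q ^ 2 := by ring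
    _ ≤ 4 * Q ^ 2 * Q := Nat.mul_le_mul_left _ hs
    _ = 4 * Q ^ 3 := by ring

lemma half_mul_blockLen_half_le_blockSum (Q : ℕ) : Q / 2 * blockLen (Q / 2) ≤ blockSum α Q := by
  calc Q / 2 * blockLen (Q / 2) ≤ (Finset.Icc (Q / 2 + 1) Q).card • blockLen (Q / 2) := by
        simp only [Nat.card_Icc, smul_eq_mul]
        exact Nat.mul_le_mul_right _ (by omega)
    _ ≤ ∑ j ∈ Finset.Icc (Q / 2 + 1) Q, blockLen j := Finset.card_nsmul_le_sum _ _ _ fun j hj =>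
        Nat.sqrt_le_sqrt (Nat.le_of_succ_le (Finset.mem_Icc.1 hj).1)
    _ ≤ ∑ j ∈ Finset.Icc 1 Q, blockLen j := Finset.sum_le_sum_of_subset
        (Finset.Icc_subset_Icc_left (by omega))
    _ ≤ blockSum α Q := Finset.sum_le_sum fun _ _ => Nat.le_add_right _ _

lemma cube_le_blockSum_sq (Q : ℕ) : Q ^ 3 ≤ 108 * blockSum α Q ^ 2 := by
  set h := Q / 2
  set s := blockLen h
  have hB : h * s ≤ blockSum α Q := half_mul_blockLen_half_le_blockSum Q
  rcases Nat.eq_zero_or_pos h with h0 | hpos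
  · have hQ : Q ≤ 1 := by omega
    have hQB : Q ≤ blockSum α Q := le_blockSum Q
    calc Q ^ 3 ≤ Q := by interval_cases Q <;> simp
      _ ≤ 108 * blockSum α Q ^ 2 := by nlinarith
  · have hs : 1 ≤ s := one_le_blockLen hpos.ne'
    have hh : h ≤ 4 * s ^ 2 := by
      have : h < (s + 1) * (s + 1) := Nat.lt_succ_sqrt h
      nlinarith
    calc Q ^ 3 ≤ (3 * h) ^ 3 := Nat.pow_le_pow_left (by omega) 3
      _ = 27 * h ^ 2 * h := by ring
      _ ≤ 27 * h ^ 2 * (4 * s ^ 2) := Nat.mul_le_mul_left _ hh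
      _ = 108 * (h * s) ^ 2 := by ring
      _ ≤ 108 * blockSum α Q ^ 2 := Nat.mul_le_mul_left _ (Nat.pow_le_pow_left hB 2)

lemma blockSum_succ_le (hα : 0 ≤ α) (Q : ℕ) :
    (blockSum α (Q + 1) : ℝ) ≤ ∑ j ∈ Finset.Icc 1 Q, (blockLen j : ℝ)
      + (Q + 1) * (blockLen (Q + 1) : ℝ) ^ α + blockLen (Q + 1) := by
  have hgap : ∑ j ∈ Finset.Icc 1 (Q + 1), (gapLen α j : ℝ)
      ≤ ∑ _j ∈ Finset.Icc 1 (Q + 1), (blockLen (Q + 1) : ℝ) ^ α :=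
    Finset.sum_le_sum fun j hj => gapLen_le_rpow_blockLen hα (Finset.mem_Icc.1 hj).2
  simp only [Finset.sum_const, Nat.card_Icc, Nat.add_sub_cancel, nsmul_eq_mul] at hgap
  push_cast [blockSum, Finset.sum_add_distrib]
  rw [Finset.sum_Icc_succ_top (by omega)]
  push_cast at hgap
  linarith

end

section
variable {α : ℝ} {n : ℕ}

lemma le_Qn_iff {Q : ℕ} : Q ≤ Qn α n ↔ blockSum α Q ≤ n := by
  refine ⟨fun h => (blockSum_mono h).trans ?_,
    fun h => Nat.le_findGreatest ((le_blockSum Q).trans h) h⟩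
  exact Nat.findGreatest_spec (P := fun Q => blockSum α Q ≤ n) n.zero_le (by simp [blockSum])

lemma lt_blockSum_Qn_succ : n < blockSum α (Qn α n + 1) :=
  not_le.1 fun h => (le_Qn_iff.2 h).not_gt (Nat.lt_succ_self _)

lemma Qn_cube_le : Qn α n ^ 3 ≤ 108 * n ^ 2 :=
  (cube_le_blockSum_sq _).trans <|
    Nat.mul_le_mul_left _ (Nat.pow_le_pow_left (le_Qn_iff.1 le_rfl) 2)

lemma le_Qn_of_four_mul_cube_le (hα : α ≤ 1) {Q : ℕ} (h : 4 * Q ^ 3 ≤ n ^ 2) : Q ≤ Qn α n :=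
  le_Qn_iff.2 <| (Nat.pow_le_pow_iff_left two_ne_zero).1 ((blockSum_sq_le hα Q).trans h)

lemma sub_sum_blockLen_le (hα : 0 ≤ α) :
    (n : ℝ) - ∑ j ∈ Finset.Icc 1 (Qn α n), (blockLen j : ℝ)
      ≤ (Qn α n + 1) * (blockLen (Qn α n + 1) : ℝ) ^ α + blockLen (Qn α n + 1) := by
  have : (n : ℝ) < blockSum α (Qn α n + 1) := by exact_mod_cast lt_blockSum_Qn_succ
  linarith [blockSum_succ_le hα (Qn α n)]

end

section
variable {α : ℝ} {n : ℕ} {t : ℝ}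

lemma sq_div_four_le_Qn (hα : α ≤ 1) (ht : 2 ≤ t) (hn : (n : ℝ) = t ^ 3) :
    t ^ 2 / 4 ≤ Qn α n := by
  set Q := ⌊t ^ 2 / 2⌋₊
  have hQ : (Q : ℝ) ≤ t ^ 2 / 2 := Nat.floor_le (by positivity)
  have hcube : 4 * Q ^ 3 ≤ n ^ 2 := by
    have : (4 * Q ^ 3 : ℝ) ≤ n ^ 2 := by
      calc (4 * Q ^ 3 : ℝ) ≤ 4 * (t ^ 2 / 2) ^ 3 := by gcongr
        _ ≤ (t ^ 3) ^ 2 := by nlinarith [sq_nonneg (t ^ 3)]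
        _ = n ^ 2 := by rw [hn]
    exact_mod_cast this
  have hQn : (Q : ℝ) ≤ Qn α n := by exact_mod_cast le_Qn_of_four_mul_cube_le hα hcube
  have hfloor : t ^ 2 / 2 < Q + 1 := Nat.lt_floor_add_one _
  nlinarith

lemma Qn_le_five_mul_sq (hn : (n : ℝ) = t ^ 3) : (Qn α n : ℝ) ≤ 5 * t ^ 2 := by
  have hcube : (Qn α n : ℝ) ^ 3 ≤ 108 * n ^ 2 := by exact_mod_cast Qn_cube_le
  refine (pow_le_pow_iff_left₀ (by positivity) (by positivity) three_ne_zero).1 ?_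
  rw [hn] at hcube
  nlinarith [sq_nonneg (t ^ 3)]

lemma sub_sum_blockLen_le_mul_rpow (hα0 : 0 ≤ α) (hα1 : α ≤ 1) (ht : 1 ≤ t)
    (hn : (n : ℝ) = t ^ 3) :
    (n : ℝ) - ∑ j ∈ Finset.Icc 1 (Qn α n), (blockLen j : ℝ) ≤ 21 * (t ^ α * t ^ 2) := by
  set Q := Qn α n
  set K := blockLen (Q + 1)
  have hQ : (Q : ℝ) ≤ 5 * t ^ 2 := Qn_le_five_mul_sq hn
  have hK : (K : ℝ) ≤ 3 * t := by
    have hK2 : (K : ℝ) ^ 2 ≤ Q + 1 := by exact_mod_cast Nat.sqrt_le' (Q + 1)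
    refine (pow_le_pow_iff_left₀ (by positivity) (by positivity) two_ne_zero).1 ?_
    nlinarith
  have htα : 1 ≤ t ^ α := Real.one_le_rpow ht hα0
  have hKα : (K : ℝ) ^ α ≤ 3 * t ^ α := by
    calc (K : ℝ) ^ α ≤ (3 * t) ^ α := Real.rpow_le_rpow (by positivity) hK hα0
      _ = 3 ^ α * t ^ α := Real.mul_rpow (by norm_num) (by positivity)
      _ ≤ 3 * t ^ α := by
        gcongr
        simpa using Real.rpow_le_rpow_of_exponent_le (by norm_num : (1 : ℝ) ≤ 3) hα1
  have hQK : ((Q : ℝ) + 1) * (K : ℝ) ^ α ≤ 6 * t ^ 2 * (3 * t ^ α) := by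
    gcongr
    nlinarith
  have hKt : (K : ℝ) ≤ 3 * (t ^ α * t ^ 2) := by nlinarith
  linarith [sub_sum_blockLen_le (n := n) hα0]

end

/-- `Q_n ≍ n^{2/3}` and `n − Σ_{j=1}^{Q_n} n_j = O(n^{(α+2)/3})`. -/
theorem Qn_asymptotics (α : ℝ) (hα0 : 0 < α) (hα1 : α < 1) :
    ∃ c C : ℝ, 0 < c ∧ 0 < C ∧ ∃ N₀ : ℕ, ∀ n : ℕ, N₀ ≤ n →
      c * (n : ℝ) ^ ((2 : ℝ) / 3) ≤ (Qn α n : ℝ) ∧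
      (Qn α n : ℝ) ≤ C * (n : ℝ) ^ ((2 : ℝ) / 3) ∧
      (n : ℝ) - (∑ j ∈ Finset.Icc 1 (Qn α n), (blockLen j : ℝ))
        ≤ C * (n : ℝ) ^ ((α + 2) / 3) := by
  refine ⟨1 / 4, 21, by norm_num, by norm_num, 8, fun n hn => ?_⟩
  have hn0 : (0 : ℝ) ≤ n := n.cast_nonneg
  set t := (n : ℝ) ^ ((1 : ℝ) / 3)
  have ht0 : 0 ≤ t := by positivity
  have htn : (n : ℝ) = t ^ 3 := by rw [← Real.rpow_natCast, ← Real.rpow_mul hn0]; norm_num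
  have ht : 2 ≤ t := by
    refine (pow_le_pow_iff_left₀ (by norm_num) ht0 three_ne_zero).1 ?_
    rw [← htn]
    exact_mod_cast hn
  have h23 : (n : ℝ) ^ ((2 : ℝ) / 3) = t ^ 2 := by
    rw [← Real.rpow_natCast, ← Real.rpow_mul hn0]; norm_num
  have hα23 : (n : ℝ) ^ ((α + 2) / 3) = t ^ α * t ^ 2 := by
    rw [← Real.rpow_natCast t 2, ← Real.rpow_add (by positivity), ← Real.rpow_mul hn0]
    ring_nf
  rw [h23, hα23]
  refine ⟨by linarith [sq_div_four_le_Qn hα1.le ht htn], ?_,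
    sub_sum_blockLen_le_mul_rpow hα0.le hα1.le (by linarith) htn⟩
  linarith [Qn_le_five_mul_sq (α := α) htn, sq_nonneg t]
end
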